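/- arXiv:2505.00217 — 6 statements merged into one kernel-verified Lean document; each statement's English description precedes it below -/
import Mathlib

section
/- If Z_0, Z_1, …, Z_B are exchangeable real-valued random variables and p = (1 + |{b ∈ {1,…,B} : Z_b ≥ Z_0}|)/(B + 1), then P(p ≤ α) ≤ α for every α ∈ (0,1). (Exchangeable rank lemma underlying the validity of permutation and conformal p-values, valid even in the presence of ties.) -/
open MeasureTheory Finset
open scoped ENNReal

/-- Counting lemma: at most `t` indices can have full rank-count `≤ t`. -/
lemma rank_count_le {n : ℕ} (w : Fin n → ℝ) (t : ℝ) (ht : 0 ≤ t) :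
    ((univ.filter fun i : Fin n =>
      (((univ.filter fun c : Fin n => w c ≥ w i).card : ℝ) ≤ t)).card : ℝ) ≤ t := by
  set S := univ.filter fun i : Fin n =>
      (((univ.filter fun c : Fin n => w c ≥ w i).card : ℝ) ≤ t) with hS
  rcases S.eq_empty_or_nonempty with h | h
  · simp [h, ht]
  · obtain ⟨i, hiS, hmin⟩ := S.exists_min_image w h
    have hi : (((univ.filter fun c : Fin n => w c ≥ w i).card : ℝ) ≤ t) := by
      rw [hS] at hiS; exact (Finset.mem_filter.mp hiS).2
    have hsub : S ⊆ univ.filter fun c : Fin n => w c ≥ w i := by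
      intro j hj
      exact Finset.mem_filter.mpr ⟨Finset.mem_univ _, hmin j hj⟩
    calc ((S.card : ℝ)) ≤ ((univ.filter fun c : Fin n => w c ≥ w i).card : ℝ) := by
          exact_mod_cast Finset.card_le_card hsub
      _ ≤ t := hi

/-- **Exchangeable rank lemma (valid with ties).**
If `Z_0, Z_1, …, Z_B` are exchangeable real-valued random variables and
`p = (1 + |{b ∈ {1,…,B} : Z_b ≥ Z_0}|)/(B + 1)`, then `P(p ≤ α) ≤ α`
for every `α ∈ (0,1)`. -/
theorem exchangeable_rank_super_uniform
    {Ω : Type*} [MeasurableSpace Ω] (P : Measure Ω) [IsProbabilityMeasure P]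
    (B : ℕ) (Z : Fin (B + 1) → Ω → ℝ) (hZ : ∀ i, Measurable (Z i))
    (hexch : ∀ σ : Equiv.Perm (Fin (B + 1)),
      Measure.map (fun ω => fun i => Z (σ i) ω) P = Measure.map (fun ω => fun i => Z i ω) P)
    (p : Ω → ℝ)
    (hp : ∀ ω, p ω =
      (1 + ((univ.filter fun b : Fin (B + 1) => b ≠ 0 ∧ Z b ω ≥ Z 0 ω).card : ℝ)) / (B + 1))
    (α : ℝ) (hα : α ∈ Set.Ioo (0 : ℝ) 1) :
    P {ω | p ω ≤ α} ≤ ENNReal.ofReal α := by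
  classical
  obtain ⟨hα0, hα1⟩ := hα
  -- the count function on the product space
  set g : (Fin (B + 1) → ℝ) → ℕ :=
    fun v => (univ.filter fun b : Fin (B + 1) => b ≠ 0 ∧ v b ≥ v 0).card with hg
  have hgmeas : Measurable g := by
    have hrep : g = fun v => ∑ b : Fin (B + 1), if b ≠ 0 ∧ v b ≥ v 0 then 1 else 0 := by
      funext v
      simp only [hg]
      rw [Finset.card_filter]
    rw [hrep]
    refine Finset.measurable_sum _ (fun b _ => ?_)
    have hms : MeasurableSet {v : Fin (B + 1) → ℝ | b ≠ 0 ∧ v b ≥ v 0} := by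
      rcases eq_or_ne b 0 with hb | hb
      · simp [hb]
      · have : {v : Fin (B + 1) → ℝ | b ≠ 0 ∧ v b ≥ v 0}
            = {v : Fin (B + 1) → ℝ | v 0 ≤ v b} := by
          ext v; simp [hb, ge_iff_le]
        rw [this]
        exact measurableSet_le (measurable_pi_apply 0) (measurable_pi_apply b)
    exact Measurable.ite hms measurable_const measurable_const
  -- the event in the product space
  set A : Set (Fin (B + 1) → ℝ) := {v | (1 + (g v : ℝ)) / (B + 1) ≤ α} with hA
  have hAmeas : MeasurableSet A := by
    have : A = g ⁻¹' {n : ℕ | (1 + (n : ℝ)) / (B + 1) ≤ α} := rfl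
    rw [this]; exact hgmeas (MeasurableSet.of_discrete)
  have hZvec : Measurable (fun ω => fun i => Z i ω) := by
    exact measurable_pi_lambda _ fun i => hZ i
  have hev : {ω | p ω ≤ α} = (fun ω => fun i => Z i ω) ⁻¹' A := by
    ext ω; simp [hA, hg, hp ω]
  -- the events for each index i, via the swap permutation
  set σ : Fin (B + 1) → Equiv.Perm (Fin (B + 1)) := fun i => Equiv.swap 0 i with hσ
  set E : Fin (B + 1) → Set Ω :=
    fun i => (fun ω => fun b => Z (σ i b) ω) ⁻¹' A with hE
  have hmeasσ : ∀ i, Measurable (fun ω => fun b => Z (σ i b) ω) := fun i =>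
    measurable_pi_lambda _ fun b => hZ _
  have hEmeas : ∀ i, MeasurableSet (E i) := fun i => (hmeasσ i) hAmeas
  have hEeq : ∀ i, P (E i) = P {ω | p ω ≤ α} := by
    intro i
    have h1 : P (E i) = (Measure.map (fun ω => fun b => Z (σ i b) ω) P) A := by
      rw [Measure.map_apply (hmeasσ i) hAmeas]
    have h2 : P {ω | p ω ≤ α} = (Measure.map (fun ω => fun i => Z i ω) P) A := by
      rw [Measure.map_apply hZvec hAmeas, hev]
    rw [h1, h2, hexch (σ i)]
  -- pointwise counting bound
  have hcount : ∀ ω,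
      ((univ.filter fun i : Fin (B + 1) => ω ∈ E i).card : ℝ) ≤ α * (B + 1) := by
    intro ω
    set w : Fin (B + 1) → ℝ := fun c => Z c ω with hw
    have hmem : ∀ i : Fin (B + 1), ω ∈ E i ↔
        (((univ.filter fun c : Fin (B + 1) => w c ≥ w i).card : ℝ) ≤ α * (B + 1)) := by
      intro i
      have hb : ∀ b : Fin (B + 1), Z (σ i b) ω = w (σ i b) := fun b => rfl
      have hσ0 : σ i 0 = i := Equiv.swap_apply_left 0 i
      have hcardeq : (univ.filter fun b : Fin (B + 1) => b ≠ 0 ∧ w (σ i b) ≥ w (σ i 0)).card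
          = (univ.filter fun c : Fin (B + 1) => c ≠ i ∧ w c ≥ w i).card := by
        apply Finset.card_bij (fun b _ => σ i b)
        · intro b hb'
          simp only [Finset.mem_filter, Finset.mem_univ, true_and] at hb' ⊢
          refine ⟨?_, hσ0 ▸ hb'.2⟩
          intro hcontra
          apply hb'.1
          have hbval := congrArg (σ i).symm hcontra
          rw [Equiv.symm_apply_apply] at hbval
          simpa [hσ, Equiv.symm_swap, Equiv.swap_apply_right] using hbval
        · intro b1 h1 b2 h2 heq
          exact (σ i).injective heq
        · intro c hc
          simp only [Finset.mem_filter, Finset.mem_univ, true_and] at hc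
          refine ⟨(σ i).symm c, ?_, by simp⟩
          simp only [Finset.mem_filter, Finset.mem_univ, true_and]
          constructor
          · intro hcontra
            apply hc.1
            have := congrArg (σ i) hcontra
            rw [Equiv.apply_symm_apply, hσ0] at this
            exact this
          · rw [hσ0, Equiv.apply_symm_apply]
            exact hc.2
      have hsplit : (univ.filter fun c : Fin (B + 1) => w c ≥ w i).card
          = 1 + (univ.filter fun c : Fin (B + 1) => c ≠ i ∧ w c ≥ w i).card := by
        have : (univ.filter fun c : Fin (B + 1) => w c ≥ w i)
            = insert i (univ.filter fun c : Fin (B + 1) => c ≠ i ∧ w c ≥ w i) := by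
          ext c
          simp only [Finset.mem_filter, Finset.mem_univ, true_and, Finset.mem_insert]
          constructor
          · intro h; rcases eq_or_ne c i with h' | h'
            · exact Or.inl h'
            · exact Or.inr ⟨h', h⟩
          · rintro (h | ⟨_, h⟩)
            · subst h; exact le_refl _
            · exact h
        rw [this, Finset.card_insert_of_notMem (by simp)]
        omega
      constructor
      · intro hEi
        have : (1 + ((univ.filter fun b : Fin (B + 1) =>
            b ≠ 0 ∧ Z (σ i b) ω ≥ Z (σ i 0) ω).card : ℝ)) / (B + 1) ≤ α := hEi
        have hB1 : (0 : ℝ) < (B : ℝ) + 1 := by positivity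
        rw [div_le_iff₀ hB1] at this
        calc (((univ.filter fun c : Fin (B + 1) => w c ≥ w i).card : ℝ))
            = 1 + ((univ.filter fun c : Fin (B + 1) => c ≠ i ∧ w c ≥ w i).card : ℝ) := by
              rw [hsplit]; push_cast; ring
          _ = 1 + ((univ.filter fun b : Fin (B + 1) =>
                b ≠ 0 ∧ w (σ i b) ≥ w (σ i 0)).card : ℝ) := by rw [hcardeq]
          _ ≤ α * ((B : ℝ) + 1) := this
          _ = α * ((B : ℕ) + 1 : ℝ) := by norm_num
      · intro hle
        show (1 + ((univ.filter fun b : Fin (B + 1) =>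
            b ≠ 0 ∧ Z (σ i b) ω ≥ Z (σ i 0) ω).card : ℝ)) / (B + 1) ≤ α
        have hB1 : (0 : ℝ) < (B : ℝ) + 1 := by positivity
        rw [div_le_iff₀ hB1]
        calc (1 + ((univ.filter fun b : Fin (B + 1) =>
              b ≠ 0 ∧ w (σ i b) ≥ w (σ i 0)).card : ℝ))
            = 1 + ((univ.filter fun c : Fin (B + 1) => c ≠ i ∧ w c ≥ w i).card : ℝ) := by
              rw [hcardeq]
          _ = (((univ.filter fun c : Fin (B + 1) => w c ≥ w i).card : ℝ)) := by
              rw [hsplit]; push_cast; ring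
          _ ≤ α * ((B : ℝ) + 1) := hle
    have : (univ.filter fun i : Fin (B + 1) => ω ∈ E i)
        = univ.filter fun i : Fin (B + 1) =>
            (((univ.filter fun c : Fin (B + 1) => w c ≥ w i).card : ℝ) ≤ α * (B + 1)) := by
      apply Finset.filter_congr
      intro i _
      simpa using hmem i
    rw [this]
    exact rank_count_le w (α * (B + 1)) (by positivity)
  -- sum the measures
  have hsum : ∑ i : Fin (B + 1), P (E i) ≤ ENNReal.ofReal (α * (B + 1)) := by
    have h1 : ∑ i : Fin (B + 1), P (E i)
        = ∑ i : Fin (B + 1), ∫⁻ ω, (E i).indicator (1 : Ω → ℝ≥0∞) ω ∂P := by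
      refine Finset.sum_congr rfl fun i _ => ?_
      rw [lintegral_indicator (hEmeas i)]
      simp
    rw [h1, ← lintegral_finset_sum _ (fun i _ => measurable_one.indicator (hEmeas i))]
    calc ∫⁻ ω, ∑ i : Fin (B + 1), (E i).indicator (1 : Ω → ℝ≥0∞) ω ∂P
        ≤ ∫⁻ _, ENNReal.ofReal (α * (B + 1)) ∂P := by
          apply lintegral_mono
          intro ω
          show ∑ i : Fin (B + 1), (E i).indicator (1 : Ω → ℝ≥0∞) ω
              ≤ ENNReal.ofReal (α * (B + 1))
          have : ∑ i : Fin (B + 1), (E i).indicator (1 : Ω → ℝ≥0∞) ω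
              = ((univ.filter fun i : Fin (B + 1) => ω ∈ E i).card : ℝ≥0∞) := by
            rw [Finset.card_filter]
            push_cast
            apply Finset.sum_congr rfl
            intro i _
            by_cases h : ω ∈ E i <;> simp [Set.indicator, h]
          rw [this]
          have := hcount ω
          calc ((univ.filter fun i : Fin (B + 1) => ω ∈ E i).card : ℝ≥0∞)
              = ENNReal.ofReal ((univ.filter fun i : Fin (B + 1) => ω ∈ E i).card : ℝ) := by
                rw [ENNReal.ofReal_natCast]
            _ ≤ ENNReal.ofReal (α * (B + 1)) := ENNReal.ofReal_le_ofReal this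
      _ = ENNReal.ofReal (α * (B + 1)) := by simp
  have hsum' : ∑ i : Fin (B + 1), P (E i) = (B + 1 : ℝ≥0∞) * P {ω | p ω ≤ α} := by
    rw [Finset.sum_congr rfl (fun i _ => hEeq i)]
    simp [Finset.sum_const, Finset.card_univ, mul_comm]
  rw [hsum'] at hsum
  have hofReal : ENNReal.ofReal (α * (B + 1))
      = (B + 1 : ℝ≥0∞) * ENNReal.ofReal α := by
    rw [ENNReal.ofReal_mul hα0.le]
    rw [mul_comm]
    congr 1
    rw [show ((B : ℝ) + 1) = ((B + 1 : ℕ) : ℝ) by push_cast; ring, ENNReal.ofReal_natCast]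
    push_cast; ring
  rw [hofReal] at hsum
  have hne : (B + 1 : ℝ≥0∞) ≠ 0 := by
    intro h
    simpa using (add_eq_zero.mp h).2
  have hnt : (B + 1 : ℝ≥0∞) ≠ ⊤ := by
    simp [ENNReal.add_ne_top]
  exact (ENNReal.mul_le_mul_iff_right hne hnt).mp hsum
end

section
/- Under the sharp null hypothesis, the Monte Carlo approximation of the Fisher randomization test p-value, p̂ = (Σ_{b=1}^{B} 𝟙{T(A_b) ≥ T(A)} + 1)/(B + 1), satisfies P(p̂ ≤ α) ≤ α for every α ∈ (0,1). -/
open MeasureTheory Finset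

section Aux
variable {𝒜 : Type*} (T : 𝒜 → ℝ)

/-- number of other coordinates with statistic at least that of coordinate `j` -/
noncomputable def frtCnt {N : ℕ} (j : Fin N) (x : Fin N → 𝒜) : ℕ :=
  (univ.filter fun i : Fin N => i ≠ j ∧ T (x i) ≥ T (x j)).card

lemma frtCnt_pointwise {N : ℕ} (x : Fin N → 𝒜) (k : ℕ) :
    (univ.filter fun j : Fin N => frtCnt T j x + 1 ≤ k).card ≤ k := by
  classical
  set S := univ.filter fun j : Fin N => frtCnt T j x + 1 ≤ k with hS
  rcases S.eq_empty_or_nonempty with h | h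
  · simp [h]
  · obtain ⟨j0, hj0S, hmin⟩ := S.exists_min_image (fun j => T (x j)) h
    have hsub : S.erase j0 ⊆ univ.filter fun i : Fin N => i ≠ j0 ∧ T (x i) ≥ T (x j0) := by
      intro j hj
      rw [mem_erase] at hj
      simp only [mem_filter, mem_univ, true_and]
      exact ⟨hj.1, hmin j hj.2⟩
    have h1 : S.card - 1 ≤ frtCnt T j0 x := by
      calc S.card - 1 = (S.erase j0).card := (card_erase_of_mem hj0S).symm
        _ ≤ _ := card_le_card hsub
    have h2 : frtCnt T j0 x + 1 ≤ k := (mem_filter.mp hj0S).2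
    have h3 : 1 ≤ S.card := card_pos.mpr h
    omega

lemma frtCnt_perm {N : ℕ} (σ : Equiv.Perm (Fin N)) (j : Fin N) (x : Fin N → 𝒜) :
    frtCnt T (σ j) x = frtCnt T j (x ∘ σ) := by
  classical
  unfold frtCnt
  apply Finset.card_equiv σ.symm
  intro i
  simp only [mem_filter, mem_univ, true_and, Function.comp_apply, Equiv.apply_symm_apply, ne_eq]
  constructor
  · rintro ⟨h1, h2⟩
    exact ⟨fun hc => h1 (by rw [← hc, Equiv.apply_symm_apply]), h2⟩
  · rintro ⟨h1, h2⟩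
    exact ⟨fun hc => h1 (by rw [hc, Equiv.symm_apply_apply]), h2⟩

lemma frtCnt_slice {𝒜 : Type*} [Fintype 𝒜] (T : 𝒜 → ℝ) {B : ℕ} (j : Fin (B + 1)) (k : ℕ) :
    (univ.filter fun x : Fin (B + 1) → 𝒜 => frtCnt T j x + 1 ≤ k).card
      = (univ.filter fun x : Fin (B + 1) → 𝒜 => frtCnt T 0 x + 1 ≤ k).card := by
  classical
  set σ : Equiv.Perm (Fin (B + 1)) := Equiv.swap 0 j with hσ
  refine Finset.card_nbij' (fun x => x ∘ σ) (fun x => x ∘ σ) ?_ ?_ ?_ ?_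
  · intro x hx
    simp only [Finset.mem_coe, mem_filter, mem_univ, true_and] at hx ⊢
    have := frtCnt_perm T σ 0 x
    rw [hσ] at this
    rw [Equiv.swap_apply_left] at this
    rw [hσ, ← this]; exact hx
  · intro x hx
    simp only [Finset.mem_coe, mem_filter, mem_univ, true_and] at hx ⊢
    have := frtCnt_perm T σ j x
    rw [hσ] at this
    rw [Equiv.swap_apply_right] at this
    rw [hσ, ← this]; exact hx
  · intro x _; funext i; simp [hσ, Equiv.swap_apply_self]
  · intro x _; funext i; simp [hσ, Equiv.swap_apply_self]

lemma frtCnt_doubleCount {𝒜 : Type*} [Fintype 𝒜] (T : 𝒜 → ℝ) {B : ℕ} (k : ℕ) :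
    (B + 1) * (univ.filter fun x : Fin (B + 1) → 𝒜 => frtCnt T 0 x + 1 ≤ k).card
      ≤ Fintype.card (Fin (B + 1) → 𝒜) * k := by
  classical
  have hsum : ∑ j : Fin (B + 1),
      (univ.filter fun x : Fin (B + 1) → 𝒜 => frtCnt T j x + 1 ≤ k).card
      = (B + 1) * (univ.filter fun x : Fin (B + 1) → 𝒜 => frtCnt T 0 x + 1 ≤ k).card := by
    rw [Finset.sum_congr rfl fun j _ => frtCnt_slice T j k, Finset.sum_const, card_univ,
      Fintype.card_fin, smul_eq_mul]
  rw [← hsum]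
  have : ∀ j : Fin (B + 1),
      (univ.filter fun x : Fin (B + 1) → 𝒜 => frtCnt T j x + 1 ≤ k).card
      = ∑ x : Fin (B + 1) → 𝒜, if frtCnt T j x + 1 ≤ k then 1 else 0 := by
    intro j; rw [Finset.card_filter]
  simp_rw [this]
  rw [Finset.sum_comm]
  calc ∑ x : Fin (B + 1) → 𝒜, ∑ j : Fin (B + 1), (if frtCnt T j x + 1 ≤ k then 1 else 0)
      ≤ ∑ _x : Fin (B + 1) → 𝒜, k := by
        refine Finset.sum_le_sum fun x _ => ?_
        rw [← Finset.card_filter]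
        exact frtCnt_pointwise T x k
    _ = Fintype.card (Fin (B + 1) → 𝒜) * k := by
        rw [Finset.sum_const, card_univ, smul_eq_mul]

end Aux

/-- **Validity of the Monte Carlo Fisher randomization test p-value.**
Let `𝒜` be a finite nonempty assignment set and `T : 𝒜 → ℝ` the test statistic
(under the sharp null it depends only on the assignment).  Let
`g 0 = A, g 1 = A_1, …, g B = A_B` be independent uniform draws from `𝒜`.
Then `p̂ = (Σ_{b=1}^{B} 1{T(A_b) ≥ T(A)} + 1)/(B + 1)` satisfies
`P(p̂ ≤ α) ≤ α` for every `α ∈ (0,1)`. -/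
theorem monte_carlo_frt_valid
    {Ω : Type*} [MeasurableSpace Ω] (P : Measure Ω) [IsProbabilityMeasure P]
    {𝒜 : Type*} [Fintype 𝒜] [Nonempty 𝒜] [MeasurableSpace 𝒜] [MeasurableSingletonClass 𝒜]
    (T : 𝒜 → ℝ) (B : ℕ)
    (g : Fin (B + 1) → Ω → 𝒜) (hg : ∀ i, Measurable (g i))
    (hindep : ProbabilityTheory.iIndepFun g P)
    (hunif : ∀ i a, P {ω | g i ω = a} = 1 / (Fintype.card 𝒜 : ENNReal))
    (phat : Ω → ℝ)
    (hphat : ∀ ω, phat ω =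
      (((univ.filter fun b : Fin B => T (g b.succ ω) ≥ T (g 0 ω)).card : ℝ) + 1) / (B + 1))
    (α : ℝ) (hα : α ∈ Set.Ioo (0 : ℝ) 1) :
    P {ω | phat ω ≤ α} ≤ ENNReal.ofReal α := by
  classical
  obtain ⟨hα0, hα1⟩ := hα
  set c := Fintype.card 𝒜 with hc
  have hc0 : 0 < c := Fintype.card_pos
  set k := ⌊α * (B + 1)⌋₊ with hk
  set F : Ω → (Fin (B + 1) → 𝒜) := fun ω i => g i ω with hFdef
  have hFm : Measurable F := measurable_pi_lambda _ hg
  set S : Set (Fin (B + 1) → 𝒜) := {x | frtCnt T 0 x + 1 ≤ k} with hSdef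
  -- inclusion of events
  have hsub : {ω | phat ω ≤ α} ⊆ F ⁻¹' S := by
    intro ω hω
    simp only [Set.mem_setOf_eq] at hω
    rw [hphat ω] at hω
    have hcard : (univ.filter fun b : Fin B => T (g b.succ ω) ≥ T (g 0 ω)).card
        = frtCnt T 0 (F ω) := by
      unfold frtCnt
      refine Finset.card_bij (fun b _ => b.succ) ?_ ?_ ?_
      · intro b hb
        simp only [mem_filter, mem_univ, true_and] at hb ⊢
        exact ⟨Fin.succ_ne_zero b, hb⟩
      · intro b1 _ b2 _ h; exact Fin.succ_injective _ h
      · intro i hi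
        simp only [mem_filter, mem_univ, true_and] at hi
        refine ⟨i.pred hi.1, ?_, by simp⟩
        simp only [mem_filter, mem_univ, true_and]
        simpa [Fin.succ_pred] using hi.2
    set m := (univ.filter fun b : Fin B => T (g b.succ ω) ≥ T (g 0 ω)).card with hm
    have hB1 : (0:ℝ) < (B:ℝ) + 1 := by positivity
    rw [div_le_iff₀ hB1] at hω
    have hle : m + 1 ≤ k := by
      rw [hk]
      refine Nat.le_floor ?_
      push_cast
      convert hω using 2
    simp only [Set.mem_preimage, hSdef, Set.mem_setOf_eq, ← hcard]
    exact hle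
  -- measurability on the finite codomain
  have hmeasS : MeasurableSet S := (Set.toFinite S).measurableSet
  -- singleton measure of the pushforward
  have hginv : ∀ i (a : 𝒜), P (g i ⁻¹' {a}) = ((c : ENNReal))⁻¹ := by
    intro i a
    have : g i ⁻¹' {a} = {ω | g i ω = a} := by ext ω; simp
    rw [this, hunif i a, one_div]
  have hsing : ∀ y : Fin (B + 1) → 𝒜, (P.map F) {y} = ((c : ENNReal))⁻¹ ^ (B + 1) := by
    intro y
    rw [Measure.map_apply hFm (measurableSet_singleton y)]
    have hpre : F ⁻¹' {y} = ⋂ i ∈ (univ : Finset (Fin (B + 1))), g i ⁻¹' {y i} := by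
      ext ω
      simp [hFdef, funext_iff]
    rw [hpre,
      hindep.measure_inter_preimage_eq_mul univ (sets := fun i => {y i})
        (fun i _ => measurableSet_singleton (y i))]
    simp_rw [hginv]
    rw [Finset.prod_const, card_univ, Fintype.card_fin]
  -- measure of the target set
  set Efin : Finset (Fin (B + 1) → 𝒜) :=
    univ.filter (fun x => frtCnt T 0 x + 1 ≤ k) with hEfin
  have hSE : S = ↑Efin := by ext x; simp [hSdef, hEfin]
  have hmu : (P.map F) S = Efin.card * ((c : ENNReal))⁻¹ ^ (B + 1) := by
    rw [hSE, show (↑Efin : Set (Fin (B + 1) → 𝒜)) = ⋃ x ∈ Efin, {x} from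
      (Set.biUnion_of_singleton _).symm,
      measure_biUnion_finset ?_ (fun x _ => measurableSet_singleton x)]
    · simp_rw [hsing]
      rw [Finset.sum_const, nsmul_eq_mul]
    · intro x _ y _ hxy
      exact Set.disjoint_singleton.mpr hxy
  -- counting bound
  have hnat : (B + 1) * Efin.card ≤ c ^ (B + 1) * k := by
    have := frtCnt_doubleCount (𝒜 := 𝒜) T (B := B) k
    rwa [Fintype.card_fun, Fintype.card_fin, ← hc] at this
  have hpow0 : ((c : ENNReal)) ^ (B + 1) ≠ 0 :=
    pow_ne_zero _ (Nat.cast_ne_zero.mpr hc0.ne')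
  have hpowt : ((c : ENNReal)) ^ (B + 1) ≠ ⊤ :=
    ENNReal.pow_ne_top (ENNReal.natCast_ne_top c)
  have hB0 : ((B : ENNReal) + 1) ≠ 0 := by
    have : ((B + 1 : ℕ) : ENNReal) ≠ 0 := Nat.cast_ne_zero.mpr (Nat.succ_ne_zero B)
    simpa using this
  have hBt : ((B : ENNReal) + 1) ≠ ⊤ := by
    exact_mod_cast ENNReal.natCast_ne_top (B + 1)
  have h1 : (P.map F) S ≤ (k : ENNReal) / ((B : ENNReal) + 1) := by
    rw [hmu, ENNReal.le_div_iff_mul_le (Or.inl hB0) (Or.inl hBt)]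
    have hcast : ((B : ENNReal) + 1) * Efin.card ≤ (c : ENNReal) ^ (B + 1) * k := by
      have : (((B + 1) * Efin.card : ℕ) : ENNReal) ≤ ((c ^ (B + 1) * k : ℕ) : ENNReal) :=
        Nat.cast_le.mpr hnat
      push_cast at this
      convert this using 2 <;> push_cast <;> ring
    calc (Efin.card : ENNReal) * ((c : ENNReal))⁻¹ ^ (B + 1) * ((B : ENNReal) + 1)
        = (((B : ENNReal) + 1) * Efin.card) * (((c : ENNReal)) ^ (B + 1))⁻¹ := by
          rw [ENNReal.inv_pow]; ring
      _ ≤ ((c : ENNReal) ^ (B + 1) * k) * (((c : ENNReal)) ^ (B + 1))⁻¹ :=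
          mul_le_mul_left hcast _
      _ = (k : ENNReal) := by
          rw [mul_comm ((c : ENNReal) ^ (B + 1)) (k : ENNReal), mul_assoc,
            ENNReal.mul_inv_cancel hpow0 hpowt, mul_one]
  have h2 : (k : ENNReal) / ((B : ENNReal) + 1) ≤ ENNReal.ofReal α := by
    rw [ENNReal.div_le_iff hB0 hBt]
    have hkle : (k : ℝ) ≤ α * ((B : ℝ) + 1) := by
      rw [hk]; exact Nat.floor_le (by positivity)
    calc (k : ENNReal) = ENNReal.ofReal (k : ℝ) := (ENNReal.ofReal_natCast k).symm
      _ ≤ ENNReal.ofReal (α * ((B : ℝ) + 1)) := ENNReal.ofReal_le_ofReal hkle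
      _ = ENNReal.ofReal α * ENNReal.ofReal ((B : ℝ) + 1) := ENNReal.ofReal_mul hα0.le
      _ = ENNReal.ofReal α * ((B : ENNReal) + 1) := by
          congr 1
          rw [show ((B : ℝ) + 1) = ((B + 1 : ℕ) : ℝ) by push_cast; ring,
            ENNReal.ofReal_natCast]
          push_cast; ring
  calc P {ω | phat ω ≤ α} ≤ P (F ⁻¹' S) := measure_mono hsub
    _ = (P.map F) S := (Measure.map_apply hFm hmeasS).symm
    _ ≤ (k : ENNReal) / ((B : ENNReal) + 1) := h1
    _ ≤ ENNReal.ofReal α := h2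
end

section
/- If the scores s_1, …, s_n, s_{n+1} are exchangeable real-valued random variables that are almost surely pairwise distinct, then the conformal p-value p = (|{i ≤ n : s_i > s_{n+1}}| + 1)/(n + 1) satisfies P(p = k/(n+1)) = 1/(n+1) for each k ∈ {1, …, n+1}; consequently, for every γ ∈ (0,1), P(p ≤ γ) = ⌊γ(n+1)⌋/(n+1) ≤ γ. (Finite-sample exact validity of the nearest-neighbor conformal p-value for individual-level exchangeability testing.) -/
open MeasureTheory Finset

namespace ConformalAux

variable {n : ℕ}

/-- The rank statistic: the number of coordinates strictly larger than `f j`. -/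
noncomputable def rk (f : Fin (n + 1) → ℝ) (j : Fin (n + 1)) : ℕ :=
  (univ.filter fun i => f i > f j).card

lemma rk_le (f : Fin (n + 1) → ℝ) (j : Fin (n + 1)) : rk f j ≤ n := by
  have hsub : (univ.filter fun i => f i > f j) ⊆ univ.erase j := by
    intro i hi
    simp only [mem_filter, mem_univ, true_and] at hi
    refine mem_erase.2 ⟨?_, mem_univ _⟩
    rintro rfl; exact lt_irrefl _ hi
  calc rk f j ≤ (univ.erase j).card := card_le_card hsub
    _ = n := by simp [card_erase_of_mem]

lemma rk_lt (f : Fin (n + 1) → ℝ) {j j' : Fin (n + 1)} (hlt : f j < f j') :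
    rk f j' < rk f j := by
  apply card_lt_card
  rw [Finset.ssubset_iff_of_subset]
  · exact ⟨j', by simp [hlt], by simp⟩
  · intro i hi
    simp only [mem_filter, mem_univ, true_and] at hi ⊢
    exact lt_trans hlt hi

lemma rk_inj (f : Fin (n + 1) → ℝ) (hf : ∀ i j : Fin (n + 1), i ≠ j → f i ≠ f j) :
    Function.Injective (rk f) := by
  intro j j' h
  by_contra hne
  rcases (hf j j' hne).lt_or_gt with hlt | hlt
  · exact (rk_lt f hlt).ne' h
  · exact (rk_lt f hlt).ne h

lemma rk_surj (f : Fin (n + 1) → ℝ) (hf : ∀ i j : Fin (n + 1), i ≠ j → f i ≠ f j)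
    {m : ℕ} (hm : m ≤ n) : ∃ j, rk f j = m := by
  have hinj : Function.Injective
      (fun j => (⟨rk f j, Nat.lt_succ_of_le (rk_le f j)⟩ : Fin (n + 1))) := by
    intro a b hab
    exact rk_inj f hf (by simpa [Fin.ext_iff] using hab)
  obtain ⟨j, hj⟩ := (Finite.injective_iff_surjective.mp hinj) ⟨m, Nat.lt_succ_of_le hm⟩
  exact ⟨j, by simpa [Fin.ext_iff] using hj⟩

lemma rk_comp (f : Fin (n + 1) → ℝ) (σ : Equiv.Perm (Fin (n + 1))) (j : Fin (n + 1)) :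
    rk (fun i => f (σ i)) j = rk f (σ j) := by
  simp only [rk, card_filter]
  exact Fintype.sum_equiv σ _ _ (fun i => rfl)

lemma measurable_rk (j : Fin (n + 1)) : Measurable fun f : Fin (n + 1) → ℝ => rk f j := by
  have h : (fun f : Fin (n + 1) → ℝ => rk f j)
      = fun f => ∑ i : Fin (n + 1), if f j < f i then 1 else 0 := by
    funext f; rw [rk, card_filter]
  rw [h]
  exact Finset.measurable_sum _ fun i _ => Measurable.ite
    (measurableSet_lt (measurable_pi_apply _) (measurable_pi_apply _))
    measurable_const measurable_const

lemma rk_last_eq (f : Fin (n + 1) → ℝ) :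
    rk f (Fin.last n) = (univ.filter fun i : Fin n => f i.castSucc > f (Fin.last n)).card := by
  simp only [rk, card_filter]
  rw [Fin.sum_univ_castSucc]
  simp

lemma key {Ω : Type*} [MeasurableSpace Ω] (P : Measure Ω) [IsProbabilityMeasure P]
    (n : ℕ) (s : Fin (n + 1) → Ω → ℝ) (hs : ∀ i, Measurable (s i))
    (hexch : ∀ σ : Equiv.Perm (Fin (n + 1)),
      Measure.map (fun ω => fun i => s (σ i) ω) P = Measure.map (fun ω => fun i => s i ω) P)
    (hdist : ∀ᵐ ω ∂P, ∀ i j : Fin (n + 1), i ≠ j → s i ω ≠ s j ω)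
    {m : ℕ} (hm : m ≤ n) :
    P {ω | rk (fun i => s i ω) (Fin.last n) = m} = 1 / ((n : ENNReal) + 1) := by
  classical
  have hXm : Measurable fun ω => (fun i => s i ω) := measurable_pi_lambda _ hs
  have hSmeas : ∀ j, MeasurableSet {f : Fin (n + 1) → ℝ | rk f j = m} :=
    fun j => measurable_rk j (measurableSet_singleton m)
  set E : Fin (n + 1) → Set Ω := fun j => {ω | rk (fun i => s i ω) j = m} with hE
  have hEmeas : ∀ j, MeasurableSet (E j) := fun j => hXm (hSmeas j)
  have hEeq : ∀ j, P (E j) = P (E (Fin.last n)) := by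
    intro j
    set σ : Equiv.Perm (Fin (n + 1)) := Equiv.swap (Fin.last n) j with hσ
    have hg : Measurable fun ω => fun i => s (σ i) ω :=
      measurable_pi_lambda _ fun i => hs (σ i)
    have h1 : (fun ω => fun i => s (σ i) ω) ⁻¹' {f | rk f (Fin.last n) = m} = E j := by
      ext ω
      simp only [Set.mem_preimage, Set.mem_setOf_eq, hE]
      have h0 : rk (fun i => s (σ i) ω) (Fin.last n)
          = rk (fun i => s i ω) (σ (Fin.last n)) := rk_comp (fun i => s i ω) σ (Fin.last n)
      rw [h0, hσ, Equiv.swap_apply_left]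
    calc P (E j) = P ((fun ω => fun i => s (σ i) ω) ⁻¹' {f | rk f (Fin.last n) = m}) := by
          rw [h1]
      _ = (Measure.map (fun ω => fun i => s (σ i) ω) P) {f | rk f (Fin.last n) = m} :=
          (Measure.map_apply hg (hSmeas _)).symm
      _ = (Measure.map (fun ω => fun i => s i ω) P) {f | rk f (Fin.last n) = m} := by
          rw [hexch σ]
      _ = P (E (Fin.last n)) := Measure.map_apply hXm (hSmeas _)
  set D : Set Ω := {ω | ∀ i j : Fin (n + 1), i ≠ j → s i ω ≠ s j ω} with hDdef
  have hDmeas : MeasurableSet D := by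
    have hD2 : D = ⋂ (i) (j) (_ : i ≠ j), {ω | s i ω ≠ s j ω} := by
      ext ω; simp [hDdef, Set.mem_iInter]
    rw [hD2]
    exact MeasurableSet.iInter fun i => MeasurableSet.iInter fun j =>
      MeasurableSet.iInter fun _ => (measurableSet_eq_fun (hs i) (hs j)).compl
  have hDc : P Dᶜ = 0 := by
    have := ae_iff.1 hdist
    simpa [hDdef, Set.compl_setOf] using this
  have hDone : P D = 1 := by
    have h := measure_add_measure_compl (μ := P) hDmeas
    rw [hDc, add_zero, measure_univ] at h
    exact h
  have hUnion : (⋃ j, E j ∩ D) = D := by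
    apply Set.Subset.antisymm
    · exact Set.iUnion_subset fun j => Set.inter_subset_right
    · intro ω hω
      obtain ⟨j, hj⟩ := rk_surj (fun i => s i ω) hω hm
      exact Set.mem_iUnion.2 ⟨j, hj, hω⟩
  have hdisj : Pairwise (Function.onFun Disjoint fun j => E j ∩ D) := by
    intro j j' hjj'
    rw [Function.onFun, Set.disjoint_left]
    rintro ω ⟨hj, hω⟩ ⟨hj', _⟩
    exact hjj' (rk_inj (fun i => s i ω) hω (hj.trans hj'.symm))
  have hsum : ∑ j : Fin (n + 1), P (E j ∩ D) = 1 := by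
    rw [← tsum_fintype (L := SummationFilter.unconditional _), ← measure_iUnion hdisj (fun j => (hEmeas j).inter hDmeas),
      hUnion, hDone]
  have hinter : ∀ j, P (E j ∩ D) = P (E j) := fun j => measure_inter_conull hDc
  have hsum' : ((n : ENNReal) + 1) * P (E (Fin.last n)) = 1 := by
    have h2 : ∑ j : Fin (n + 1), P (E j ∩ D) = ((n : ENNReal) + 1) * P (E (Fin.last n)) := by
      rw [Finset.sum_congr rfl (fun j _ => (hinter j).trans (hEeq j)),
        Finset.sum_const, Finset.card_univ, Fintype.card_fin, nsmul_eq_mul]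
      push_cast
      ring
    rw [← h2, hsum]
  have hne : ((n : ENNReal) + 1) ≠ 0 := by simp
  have hnt : ((n : ENNReal) + 1) ≠ ⊤ :=
    ENNReal.add_ne_top.2 ⟨ENNReal.natCast_ne_top n, ENNReal.one_ne_top⟩
  rw [ENNReal.eq_div_iff hne hnt]
  exact hsum'

end ConformalAux


open ConformalAux in
/-- **Finite-sample exact validity of the conformal p-value.**
If the scores `s_1, …, s_n, s_{n+1}` (calibration scores `s 0, …, s (n-1)`
indexed by `Fin.castSucc` and test score `s (Fin.last n)`) are exchangeable and
almost surely pairwise distinct, then the conformal p-value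
`p = (|{i ≤ n : s_i > s_{n+1}}| + 1)/(n + 1)` is uniform on
`{1/(n+1), …, (n+1)/(n+1)}`; consequently, for every `γ ∈ (0,1)`,
`P(p ≤ γ) = ⌊γ(n+1)⌋/(n+1) ≤ γ`. -/
theorem conformal_pvalue_exact
    {Ω : Type*} [MeasurableSpace Ω] (P : Measure Ω) [IsProbabilityMeasure P]
    (n : ℕ) (s : Fin (n + 1) → Ω → ℝ) (hs : ∀ i, Measurable (s i))
    (hexch : ∀ σ : Equiv.Perm (Fin (n + 1)),
      Measure.map (fun ω => fun i => s (σ i) ω) P = Measure.map (fun ω => fun i => s i ω) P)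
    (hdist : ∀ᵐ ω ∂P, ∀ i j : Fin (n + 1), i ≠ j → s i ω ≠ s j ω)
    (p : Ω → ℝ)
    (hp : ∀ ω, p ω =
      (((univ.filter fun i : Fin n => s i.castSucc ω > s (Fin.last n) ω).card : ℝ) + 1)
        / (n + 1)) :
    (∀ k : ℕ, 1 ≤ k → k ≤ n + 1 →
        P {ω | p ω = (k : ℝ) / (n + 1)} = 1 / ((n : ENNReal) + 1)) ∧
    (∀ γ : ℝ, γ ∈ Set.Ioo (0 : ℝ) 1 →
        P {ω | p ω ≤ γ} = ENNReal.ofReal ((⌊γ * (n + 1)⌋ : ℝ) / (n + 1)) ∧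
        ((⌊γ * (n + 1)⌋ : ℝ) / (n + 1)) ≤ γ) := by
  have hpos : (0 : ℝ) < (n : ℝ) + 1 := by positivity
  have hcard : ∀ ω, (univ.filter fun i : Fin n => s i.castSucc ω > s (Fin.last n) ω).card
      = rk (fun i => s i ω) (Fin.last n) := fun ω => (rk_last_eq (fun i => s i ω)).symm
  constructor
  · -- part 1
    intro k hk1 hk2
    have hset : {ω | p ω = (k : ℝ) / (n + 1)}
        = {ω | rk (fun i => s i ω) (Fin.last n) = k - 1} := by
      ext ω
      simp only [Set.mem_setOf_eq, hp ω, hcard ω]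
      rw [div_eq_div_iff hpos.ne' hpos.ne', mul_left_inj' hpos.ne']
      rw [show ((rk (fun i => s i ω) (Fin.last n) : ℝ) + 1 = (k : ℝ))
          ↔ rk (fun i => s i ω) (Fin.last n) + 1 = k by exact_mod_cast Iff.rfl]
      omega
    rw [hset]
    exact key P n s hs hexch hdist (by omega)
  · -- part 2
    rintro γ ⟨hγ0, hγ1⟩
    have hx0 : (0 : ℝ) < γ * ((n : ℝ) + 1) := by positivity
    have hfl0 : 0 ≤ ⌊γ * ((n : ℝ) + 1)⌋ := Int.floor_nonneg.2 hx0.le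
    set K : ℕ := (⌊γ * ((n : ℝ) + 1)⌋).toNat with hK
    have hKcast : ((K : ℕ) : ℤ) = ⌊γ * ((n : ℝ) + 1)⌋ := Int.toNat_of_nonneg hfl0
    have hKn : K ≤ n := by
      have hlt : ⌊γ * ((n : ℝ) + 1)⌋ < (n : ℤ) + 1 := by
        rw [Int.floor_lt]
        push_cast
        nlinarith
      omega
    have hXm : Measurable fun ω => (fun i => s i ω) := measurable_pi_lambda _ hs
    have hEm : ∀ m : ℕ, MeasurableSet {ω | rk (fun i => s i ω) (Fin.last n) = m} :=
      fun m => hXm ((measurable_rk (Fin.last n)) (measurableSet_singleton m))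
    have hset : {ω | p ω ≤ γ}
        = ⋃ m ∈ Finset.range K, {ω | rk (fun i => s i ω) (Fin.last n) = m} := by
      ext ω
      simp only [Set.mem_setOf_eq, hp ω, hcard ω, Set.mem_iUnion, Finset.mem_range,
        exists_prop]
      rw [div_le_iff₀ hpos]
      constructor
      · intro h
        have h2 : ((rk (fun i => s i ω) (Fin.last n) : ℤ) + 1) ≤ ⌊γ * ((n : ℝ) + 1)⌋ := by
          rw [Int.le_floor]
          push_cast
          linarith
        exact ⟨rk (fun i => s i ω) (Fin.last n), by omega, rfl⟩
      · rintro ⟨m, hmK, hmeq⟩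
        have h2 : ((rk (fun i => s i ω) (Fin.last n) : ℤ) + 1) ≤ ⌊γ * ((n : ℝ) + 1)⌋ := by
          omega
        have h3 := Int.le_floor.1 h2
        push_cast at h3
        linarith
    have hdisj : Set.PairwiseDisjoint ↑(Finset.range K)
        (fun m => {ω | rk (fun i => s i ω) (Fin.last n) = m}) := by
      intro a _ b _ hab
      rw [Function.onFun, Set.disjoint_left]
      rintro ω h1 h2
      exact hab ((h1 : _ = a).symm.trans h2)
    have hmeasure : P {ω | p ω ≤ γ} = (K : ENNReal) / ((n : ENNReal) + 1) := by
      rw [hset, measure_biUnion_finset hdisj (fun m _ => hEm m)]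
      rw [Finset.sum_congr rfl (fun m hm =>
        key P n s hs hexch hdist (by have := Finset.mem_range.1 hm; omega))]
      rw [Finset.sum_const, Finset.card_range, nsmul_eq_mul, mul_one_div]
    refine ⟨?_, ?_⟩
    · rw [hmeasure]
      have h4 : ((⌊γ * ((n : ℝ) + 1)⌋ : ℤ) : ℝ) = (K : ℝ) := by exact_mod_cast hKcast.symm
      rw [h4, ENNReal.ofReal_div_of_pos hpos, ENNReal.ofReal_natCast]
      congr 1
      rw [show ((n : ℝ) + 1) = ((n + 1 : ℕ) : ℝ) by push_cast; ring, ENNReal.ofReal_natCast]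
      push_cast
      ring
    · rw [div_le_iff₀ hpos]
      exact Int.floor_le _
end

section
/- The augmented inverse probability weighting functional for the treated-arm mean is doubly robust within the randomized trial: for any bounded measurable outcome working model m : ℝ^d → ℝ and any measurable working propensity ẽ : ℝ^d → ℝ with ε ≤ ẽ(X) ≤ 1 − ε almost surely, if either ẽ(X) = e(X) almost surely, or m(X) = E[Y(1) | σ(X)] almost surely, then E[ A·(Y − m(X))/ẽ(X) + m(X) ] = E[Y(1)]. -/
open MeasureTheory ProbabilityTheory

lemma aux_condexp_mul_of_condIndepFun
    {Ω : Type*} {m' : MeasurableSpace Ω} [mΩ : MeasurableSpace Ω]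
    [StandardBorelSpace Ω] [Nonempty Ω]
    (hm' : m' ≤ mΩ)
    (P : Measure Ω) [IsProbabilityMeasure P]
    (f g : Ω → ℝ) (hf : Measurable f) (hg : Measurable g)
    (Cf Cg : ℝ) (hCf : ∀ ω, |f ω| ≤ Cf) (hCg : ∀ ω, |g ω| ≤ Cg)
    (h : CondIndepFun m' hm' f g P) :
    P[fun ω => f ω * g ω | m'] =ᵐ[P] fun ω => (P[f|m']) ω * (P[g|m']) ω := by
  set κ := condExpKernel P m' with hκdef
  have hCf0 : 0 ≤ Cf := le_trans (abs_nonneg _) (hCf (Classical.arbitrary Ω))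
  have hCg0 : 0 ≤ Cg := le_trans (abs_nonneg _) (hCg (Classical.arbitrary Ω))
  have hmeas : ∀ s t : Set ℝ, MeasurableSet s → MeasurableSet t →
      ∀ᵐ ω ∂(P.trim hm'), κ ω (f ⁻¹' s ∩ g ⁻¹' t) = κ ω (f ⁻¹' s) * κ ω (g ⁻¹' t) :=
    Kernel.indepFun_iff_measure_inter_preimage_eq_mul.mp h
  have h2 : ∀ᵐ ω ∂(P.trim hm'), ∀ q r : ℚ,
      κ ω (f ⁻¹' Set.Iio (q : ℝ) ∩ g ⁻¹' Set.Iio (r : ℝ))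
        = κ ω (f ⁻¹' Set.Iio (q : ℝ)) * κ ω (g ⁻¹' Set.Iio (r : ℝ)) := by
    rw [ae_all_iff]
    exact fun q => ae_all_iff.mpr fun r => hmeas _ _ measurableSet_Iio measurableSet_Iio
  have hind : ∀ᵐ ω ∂(P.trim hm'), IndepFun f g (κ ω) := by
    filter_upwards [h2] with ω hω
    have hgen : (inferInstance : MeasurableSpace ℝ)
        = MeasurableSpace.generateFrom (⋃ q : ℚ, {Set.Iio (q : ℝ)}) :=
      Real.borel_eq_generateFrom_Iio_rat
    have hpi : IsPiSystem (⋃ q : ℚ, {Set.Iio (q : ℝ)}) := Real.isPiSystem_Iio_rat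
    have hIndep : Indep (MeasurableSpace.comap f inferInstance)
        (MeasurableSpace.comap g inferInstance) (κ ω) := by
      refine IndepSets.indep (hf.comap_le) (hg.comap_le) (hpi.comap f) (hpi.comap g) ?_ ?_ ?_
      · rw [hgen, MeasurableSpace.comap_generateFrom]; rfl
      · rw [hgen, MeasurableSpace.comap_generateFrom]; rfl
      · rintro _ _ ⟨s, hs, rfl⟩ ⟨t, ht, rfl⟩
        simp only [Set.mem_iUnion, Set.mem_singleton_iff] at hs ht
        obtain ⟨q, rfl⟩ := hs
        obtain ⟨r, rfl⟩ := ht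
        exact Filter.Eventually.of_forall fun _ => hω q r
    exact hIndep
  have hif : ∀ μ : Measure Ω, IsProbabilityMeasure μ → Integrable f μ := fun μ hμ => by
    haveI := hμ
    exact (integrable_const Cf).mono' hf.aestronglyMeasurable
      (Filter.Eventually.of_forall fun x => by simpa using hCf x)
  have hig : ∀ μ : Measure Ω, IsProbabilityMeasure μ → Integrable g μ := fun μ hμ => by
    haveI := hμ
    exact (integrable_const Cg).mono' hg.aestronglyMeasurable
      (Filter.Eventually.of_forall fun x => by simpa using hCg x)
  have hifg : Integrable (fun ω => f ω * g ω) P :=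
    (integrable_const (Cf * Cg)).mono' (hf.mul hg).aestronglyMeasurable
      (Filter.Eventually.of_forall fun x => by
        simp only [norm_mul, Real.norm_eq_abs]
        exact mul_le_mul (hCf x) (hCg x) (abs_nonneg _) hCf0)
  have hae : ∀ᵐ ω ∂P, ∫ y, f y * g y ∂(κ ω) = (∫ y, f y ∂(κ ω)) * ∫ y, g y ∂(κ ω) := by
    refine ae_of_ae_trim hm' ?_
    filter_upwards [hind] with ω hω
    exact IndepFun.integral_mul_eq_mul_integral hω (hif (κ ω) inferInstance).aestronglyMeasurable (hig (κ ω) inferInstance).aestronglyMeasurable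
  have h1 := condExp_ae_eq_integral_condExpKernel hm' hifg
  have hf1 := condExp_ae_eq_integral_condExpKernel hm' (hif P inferInstance)
  have hg1 := condExp_ae_eq_integral_condExpKernel hm' (hig P inferInstance)
  filter_upwards [hae, h1, hf1, hg1] with ω hω h1ω hfω hgω
  rw [h1ω, hfω, hgω]
  exact hω

/-- **Double robustness of the AIPW functional for the treated-arm mean in the RCT.**
For any bounded measurable outcome working model `m` and any measurable working
propensity `ẽ` with `ε ≤ ẽ(X) ≤ 1−ε` a.s., if either `ẽ(X) = e(X)` a.s. or
`m(X) = E[Y(1) | σ(X)]` a.s., then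
`E[A·(Y − m(X))/ẽ(X) + m(X)] = E[Y(1)]`. -/
theorem aipw_doubly_robust
    {Ω : Type*} [MeasurableSpace Ω] [StandardBorelSpace Ω] [Nonempty Ω]
    (P : Measure Ω) [IsProbabilityMeasure P]
    {d : ℕ} (X : Ω → (Fin d → ℝ)) (hX : Measurable X)
    (A : Ω → ℝ) (hA : Measurable A) (hA01 : ∀ ω, A ω = 0 ∨ A ω = 1)
    (Y0 Y1 : Ω → ℝ) (hY0 : Measurable Y0) (hY1 : Measurable Y1)
    (CY : ℝ) (hbound : ∀ ω, |Y0 ω| ≤ CY ∧ |Y1 ω| ≤ CY)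
    (Y : Ω → ℝ) (hY : ∀ ω, Y ω = A ω * Y1 ω + (1 - A ω) * Y0 ω)
    (e : (Fin d → ℝ) → ℝ) (he : Measurable e)
    (hps : P[A | MeasurableSpace.comap X inferInstance] =ᵐ[P] fun ω => e (X ω))
    (ε : ℝ) (hε : 0 < ε)
    (hoverlap : ∀ᵐ ω ∂P, ε ≤ e (X ω) ∧ e (X ω) ≤ 1 - ε)
    (hunconf : CondIndepFun (MeasurableSpace.comap X inferInstance) hX.comap_le
      A (fun ω => (Y0 ω, Y1 ω)) P)
    -- working models
    (m : (Fin d → ℝ) → ℝ) (hm : Measurable m) (Cm : ℝ) (hmb : ∀ x, |m x| ≤ Cm)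
    (etil : (Fin d → ℝ) → ℝ) (hetil : Measurable etil)
    (hetilb : ∀ᵐ ω ∂P, ε ≤ etil (X ω) ∧ etil (X ω) ≤ 1 - ε)
    (hdr : ((fun ω => etil (X ω)) =ᵐ[P] fun ω => e (X ω)) ∨
      ((fun ω => m (X ω)) =ᵐ[P] P[Y1 | MeasurableSpace.comap X inferInstance])) :
    ∫ ω, (A ω * (Y ω - m (X ω)) / etil (X ω) + m (X ω)) ∂P = ∫ ω, Y1 ω ∂P := by
  have hm' : MeasurableSpace.comap X inferInstance ≤ ‹MeasurableSpace Ω› := hX.comap_le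
  have hXm : Measurable[MeasurableSpace.comap X inferInstance] X := fun s hs => ⟨s, hs, rfl⟩
  have hCm0 : 0 ≤ Cm := le_trans (abs_nonneg _) (hmb (X (Classical.arbitrary Ω)))
  have hCY0 : 0 ≤ CY := le_trans (abs_nonneg _) (hbound (Classical.arbitrary Ω)).1
  have hA1 : ∀ ω, |A ω| ≤ 1 := fun ω => by rcases hA01 ω with h | h <;> simp [h]
  -- A * Y = A * Y1
  have hAY : ∀ ω, A ω * Y ω = A ω * Y1 ω := fun ω => by
    rcases hA01 ω with h | h <;> simp [hY ω, h]
  -- conditional independence of A and Y1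
  have hAY1 : CondIndepFun (MeasurableSpace.comap X inferInstance) hX.comap_le A Y1 P := by
    have := hunconf.comp measurable_id measurable_snd
    exact this
  -- key product formula
  have hkey : P[fun ω => A ω * Y1 ω | MeasurableSpace.comap X inferInstance] =ᵐ[P]
      fun ω => (P[A|MeasurableSpace.comap X inferInstance]) ω
        * (P[Y1|MeasurableSpace.comap X inferInstance]) ω :=
    aux_condexp_mul_of_condIndepFun hX.comap_le P A Y1 hA hY1 1 CY hA1
      (fun ω => (hbound ω).2) hAY1
  -- integrable pieces
  have hmint : Integrable (fun ω => m (X ω)) P :=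
    (integrable_const Cm).mono' (hm.comp hX).aestronglyMeasurable
      (Filter.Eventually.of_forall fun ω => by simpa using hmb (X ω))
  have hY1int : Integrable Y1 P :=
    (integrable_const CY).mono' hY1.aestronglyMeasurable
      (Filter.Eventually.of_forall fun ω => by simpa using (hbound ω).2)
  have hgmeas : Measurable (fun ω => A ω * Y1 ω - m (X ω) * A ω) :=
    (hA.mul hY1).sub ((hm.comp hX).mul hA)
  have hgbound : ∀ ω, |A ω * Y1 ω - m (X ω) * A ω| ≤ CY + Cm := fun ω => by
    calc |A ω * Y1 ω - m (X ω) * A ω| ≤ |A ω * Y1 ω| + |m (X ω) * A ω| := abs_sub _ _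
    _ ≤ CY + Cm := by
        rw [abs_mul, abs_mul]
        gcongr
        · calc |A ω| * |Y1 ω| ≤ 1 * CY :=
            mul_le_mul (hA1 ω) (hbound ω).2 (abs_nonneg _) zero_le_one
          _ = CY := one_mul _
        · calc |m (X ω)| * |A ω| ≤ Cm * 1 :=
            mul_le_mul (hmb _) (hA1 ω) (abs_nonneg _) hCm0
          _ = Cm := mul_one _
  have hgint : Integrable (fun ω => A ω * Y1 ω - m (X ω) * A ω) P :=
    (integrable_const (CY + Cm)).mono' hgmeas.aestronglyMeasurable
      (Filter.Eventually.of_forall fun ω => by simpa using hgbound ω)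
  have hGint : Integrable
      (fun ω => (etil (X ω))⁻¹ * (A ω * Y1 ω - m (X ω) * A ω)) P := by
    refine (integrable_const (ε⁻¹ * (CY + Cm))).mono'
      (((hetil.comp hX).inv.mul hgmeas).aestronglyMeasurable) ?_
    filter_upwards [hetilb] with ω hω
    rw [Real.norm_eq_abs, abs_mul]
    have hpos : 0 < etil (X ω) := lt_of_lt_of_le hε hω.1
    have h1 : |(etil (X ω))⁻¹| ≤ ε⁻¹ := by
      rw [abs_of_pos (inv_pos.mpr hpos)]
      exact inv_anti₀ hε hω.1
    exact mul_le_mul h1 (hgbound ω) (abs_nonneg _) (inv_nonneg.mpr hε.le)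
  -- rewrite the integrand
  have hFeq : ∀ ω, A ω * (Y ω - m (X ω)) / etil (X ω) + m (X ω)
      = (etil (X ω))⁻¹ * (A ω * Y1 ω - m (X ω) * A ω) + m (X ω) := fun ω => by
    have h2 : A ω * (Y ω - m (X ω)) = A ω * Y1 ω - m (X ω) * A ω := by
      rw [mul_sub, hAY ω]; ring
    rw [div_eq_mul_inv, h2, mul_comm]
  -- conditional expectation of the correction term
  have hAint : Integrable A P :=
    (integrable_const (1 : ℝ)).mono' hA.aestronglyMeasurable
      (Filter.Eventually.of_forall fun ω => by simpa using hA1 ω)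
  have hmAint : Integrable (fun ω => m (X ω) * A ω) P :=
    (integrable_const (Cm * 1)).mono' (((hm.comp hX).mul hA).aestronglyMeasurable)
      (Filter.Eventually.of_forall fun ω => by
        rw [Real.norm_eq_abs, abs_mul]
        exact mul_le_mul (hmb _) (hA1 ω) (abs_nonneg _) hCm0)
  have hAmul : P[fun ω => m (X ω) * A ω | MeasurableSpace.comap X inferInstance] =ᵐ[P]
      fun ω => m (X ω) * (P[A|MeasurableSpace.comap X inferInstance]) ω :=
    condExp_mul_of_stronglyMeasurable_left ((hm.comp hXm).stronglyMeasurable) hmAint hAint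
  -- conditional expectation of g := A*Y1 - m(X)*A
  have hAY1int : Integrable (fun ω => A ω * Y1 ω) P :=
    (integrable_const CY).mono' ((hA.mul hY1).aestronglyMeasurable)
      (Filter.Eventually.of_forall fun ω => by
        rw [Real.norm_eq_abs, abs_mul]
        calc |A ω| * |Y1 ω| ≤ 1 * CY :=
          mul_le_mul (hA1 ω) (hbound ω).2 (abs_nonneg _) zero_le_one
        _ = CY := one_mul _)
  have hcg : P[fun ω => A ω * Y1 ω - m (X ω) * A ω | MeasurableSpace.comap X inferInstance]
      =ᵐ[P] fun ω => e (X ω) * (P[Y1|MeasurableSpace.comap X inferInstance]) ω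
        - m (X ω) * e (X ω) := by
    have hsub' : P[fun ω => A ω * Y1 ω - m (X ω) * A ω | MeasurableSpace.comap X inferInstance]
        =ᵐ[P] fun ω => (P[fun ω => A ω * Y1 ω|MeasurableSpace.comap X inferInstance]) ω
          - (P[fun ω => m (X ω) * A ω|MeasurableSpace.comap X inferInstance]) ω :=
      condExp_sub hAY1int hmAint _
    refine hsub'.trans ?_
    filter_upwards [hkey, hAmul, hps] with ω h1 h2 h3
    rw [h1, h2, h3]
  -- conditional expectation of G
  have hGmeasSM : StronglyMeasurable[MeasurableSpace.comap X inferInstance]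
      (fun ω => (etil (X ω))⁻¹) := ((hetil.comp hXm).inv).stronglyMeasurable
  have hcondG : P[fun ω => (etil (X ω))⁻¹ * (A ω * Y1 ω - m (X ω) * A ω)
        | MeasurableSpace.comap X inferInstance] =ᵐ[P]
      fun ω => (etil (X ω))⁻¹
        * (e (X ω) * (P[Y1|MeasurableSpace.comap X inferInstance]) ω - m (X ω) * e (X ω)) := by
    have hpull := condExp_mul_of_stronglyMeasurable_left (μ := P) hGmeasSM
      (g := fun ω => A ω * Y1 ω - m (X ω) * A ω) hGint hgint
    have hstep : (fun ω => (etil (X ω))⁻¹)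
        * P[fun ω => A ω * Y1 ω - m (X ω) * A ω|MeasurableSpace.comap X inferInstance] =ᵐ[P]
        fun ω => (etil (X ω))⁻¹
          * (e (X ω) * (P[Y1|MeasurableSpace.comap X inferInstance]) ω - m (X ω) * e (X ω)) := by
      filter_upwards [hcg] with ω hω
      simp only [Pi.mul_apply]
      rw [hω]
    exact hpull.trans hstep
  -- main computation
  calc ∫ ω, (A ω * (Y ω - m (X ω)) / etil (X ω) + m (X ω)) ∂P
      = ∫ ω, ((etil (X ω))⁻¹ * (A ω * Y1 ω - m (X ω) * A ω) + m (X ω)) ∂P :=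
        integral_congr_ae (Filter.Eventually.of_forall fun ω => hFeq ω)
    _ = (∫ ω, (etil (X ω))⁻¹ * (A ω * Y1 ω - m (X ω) * A ω) ∂P) + ∫ ω, m (X ω) ∂P :=
        integral_add hGint hmint
    _ = ∫ ω, Y1 ω ∂P := by
        rcases hdr with hee | hmm
        · -- propensity model correct
          have hG : P[fun ω => (etil (X ω))⁻¹ * (A ω * Y1 ω - m (X ω) * A ω)
                | MeasurableSpace.comap X inferInstance] =ᵐ[P]
              fun ω => (P[Y1|MeasurableSpace.comap X inferInstance]) ω - m (X ω) := by
            refine hcondG.trans ?_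
            filter_upwards [hee, hoverlap] with ω h1 h2
            have hne : e (X ω) ≠ 0 := ne_of_gt (lt_of_lt_of_le hε h2.1)
            rw [h1]
            field_simp
          have hint1 : ∫ ω, (etil (X ω))⁻¹ * (A ω * Y1 ω - m (X ω) * A ω) ∂P
              = (∫ ω, (P[Y1|MeasurableSpace.comap X inferInstance]) ω ∂P)
                - ∫ ω, m (X ω) ∂P := by
            rw [← integral_condExp hm', integral_congr_ae hG]
            exact integral_sub integrable_condExp hmint
          rw [hint1, integral_condExp hm']
          ring
        · -- outcome model correct
          have hG : P[fun ω => (etil (X ω))⁻¹ * (A ω * Y1 ω - m (X ω) * A ω)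
                | MeasurableSpace.comap X inferInstance] =ᵐ[P] fun _ => (0 : ℝ) := by
            refine hcondG.trans ?_
            filter_upwards [hmm] with ω h1
            rw [h1]
            ring
          have hint1 : ∫ ω, (etil (X ω))⁻¹ * (A ω * Y1 ω - m (X ω) * A ω) ∂P = 0 := by
            rw [← integral_condExp hm', integral_congr_ae hG, integral_zero]
          have hint2 : ∫ ω, m (X ω) ∂P = ∫ ω, Y1 ω ∂P := by
            rw [integral_congr_ae hmm]
            exact integral_condExp hm'
          rw [hint1, hint2, zero_add]
end

section
/- With all nuisance functions correctly specified (and any positive bounded variance-ratio function r), the external-control borrowing influence functional is unbiased for the control-arm mean: E[ W·(Y − μ_0(X)) + (S/π_R)·μ_0(X) ] = E[Y(0) | S = 1], where W = (π(X)/π_R)·{S(1 − A) + (1 − S)·r(X)} / [π(X)·(1 − e(X)) + (1 − π(X))·r(X)]. -/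
open MeasureTheory ProbabilityTheory

/-- **Unbiasedness of the external-control borrowing influence functional.**
With all nuisance functions correctly specified (and any positive bounded
variance-ratio function `r`),
`E[W·(Y − μ₀(X)) + (S/π_R)·μ₀(X)] = E[Y(0) | S = 1]`, where
`W = (π(X)/π_R)·{S(1−A) + (1−S)·r(X)} / [π(X)·(1−e(X)) + (1−π(X))·r(X)]`. -/
theorem borrowing_influence_unbiased
    {Ω : Type*} [MeasurableSpace Ω] (P : Measure Ω) [IsProbabilityMeasure P]
    {d : ℕ} (X : Ω → (Fin d → ℝ)) (hX : Measurable X)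
    (S : Ω → ℝ) (hS : Measurable S) (hS01 : ∀ ω, S ω = 0 ∨ S ω = 1)
    (A : Ω → ℝ) (hA : Measurable A) (hA01 : ∀ ω, A ω = 0 ∨ A ω = 1)
    (hA0 : ∀ᵐ ω ∂P, S ω = 0 → A ω = 0)
    (Y0 Y1 : Ω → ℝ) (hY0 : Measurable Y0) (hY1 : Measurable Y1)
    (CY : ℝ) (hbound : ∀ ω, |Y0 ω| ≤ CY ∧ |Y1 ω| ≤ CY)
    (Y : Ω → ℝ) (hY : ∀ ω, Y ω = A ω * Y1 ω + (1 - A ω) * Y0 ω)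
    (πR : ℝ) (hπR : πR = (P {ω | S ω = 1}).toReal) (hπRpos : 0 < πR)
    (π e r : (Fin d → ℝ) → ℝ) (hπ : Measurable π) (he : Measurable e) (hr : Measurable r)
    (ε : ℝ) (hε : 0 < ε)
    (hπb : ∀ᵐ ω ∂P, ε ≤ π (X ω) ∧ π (X ω) ≤ 1 - ε)
    (heb : ∀ᵐ ω ∂P, ε ≤ e (X ω) ∧ e (X ω) ≤ 1 - ε)
    (hrlb : ∀ᵐ ω ∂P, ε ≤ r (X ω)) (Cr : ℝ) (hrub : ∀ᵐ ω ∂P, r (X ω) ≤ Cr)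
    (hScond : P[S | MeasurableSpace.comap X inferInstance] =ᵐ[P] fun ω => π (X ω))
    (hSAcond : P[fun ω => S ω * A ω | MeasurableSpace.comap X inferInstance]
        =ᵐ[P] fun ω => e (X ω) * π (X ω))
    (μ0 : (Fin d → ℝ) → ℝ) (hμ0 : Measurable μ0) (Cμ : ℝ) (hμ0b : ∀ x, |μ0 x| ≤ Cμ)
    (hunconf : P[fun ω => S ω * (1 - A ω) * (Y ω - μ0 (X ω)) |
        MeasurableSpace.comap X inferInstance] =ᵐ[P] fun _ => 0)
    (hmeanexch : P[fun ω => (1 - S ω) * (Y ω - μ0 (X ω)) |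
        MeasurableSpace.comap X inferInstance] =ᵐ[P] fun _ => 0)
    (hreg : P[fun ω => S ω * (Y0 ω - μ0 (X ω)) |
        MeasurableSpace.comap X inferInstance] =ᵐ[P] fun _ => 0)
    (W : Ω → ℝ)
    (hW : ∀ ω, W ω = (π (X ω) / πR) * (S ω * (1 - A ω) + (1 - S ω) * r (X ω)) /
        (π (X ω) * (1 - e (X ω)) + (1 - π (X ω)) * r (X ω))) :
    ∫ ω, (W ω * (Y ω - μ0 (X ω)) + (S ω / πR) * μ0 (X ω)) ∂P
      = ∫ ω, Y0 ω ∂(P[|{ω | S ω = 1}]) := by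
  have hm : MeasurableSpace.comap X inferInstance ≤ ‹MeasurableSpace Ω› := hX.comap_le
  have hXm : Measurable[MeasurableSpace.comap X inferInstance] X := fun s hs => ⟨s, hs, rfl⟩
  haveI : SigmaFinite (P.trim hm) := by infer_instance
  -- nonemptiness and nonnegativity of bounds
  obtain ⟨ω0⟩ : Nonempty Ω := by
    rcases isEmpty_or_nonempty Ω with h | h
    · exfalso
      have h1 : P Set.univ = 1 := measure_univ
      rw [Set.univ_eq_empty_iff.mpr h] at h1
      simp at h1
    · exact h
  have hCY : 0 ≤ CY := (abs_nonneg _).trans (hbound ω0).1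
  have hCμ : 0 ≤ Cμ := (abs_nonneg _).trans (hμ0b (X ω0))
  -- integrability from boundedness
  have int_of_bdd : ∀ (f : Ω → ℝ), AEStronglyMeasurable f P → ∀ c : ℝ,
      (∀ᵐ ω ∂P, |f ω| ≤ c) → Integrable f P := by
    intro f hf c hb
    refine Integrable.mono' (integrable_const c) hf ?_
    simpa [Real.norm_eq_abs] using hb
  -- |Y| ≤ CY
  have hYb : ∀ ω, |Y ω| ≤ CY := by
    intro ω
    rcases hA01 ω with h | h
    · rw [hY ω, h]; simpa using (hbound ω).1
    · rw [hY ω, h]; simpa using (hbound ω).2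
  -- key lemma: E[h(X) Z] = 0 when E[Z | X] = 0
  have key : ∀ (h : (Fin d → ℝ) → ℝ), Measurable h → ∀ c : ℝ,
      (∀ᵐ ω ∂P, |h (X ω)| ≤ c) → ∀ Z : Ω → ℝ, Integrable Z P →
      (P[Z | MeasurableSpace.comap X inferInstance] =ᵐ[P] fun _ => 0) → ∫ ω, h (X ω) * Z ω ∂P = 0 := by
    intro h hh c hc Z hZ hZ0
    have hsm : StronglyMeasurable[MeasurableSpace.comap X inferInstance] (fun ω => h (X ω)) := (hh.comp hXm).stronglyMeasurable
    have hc' : ∀ᵐ ω ∂P, ‖h (X ω)‖ ≤ c := by simpa [Real.norm_eq_abs] using hc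
    have hmul : P[(fun ω => h (X ω)) * Z | MeasurableSpace.comap X inferInstance] =ᵐ[P] (fun ω => h (X ω)) * P[Z | MeasurableSpace.comap X inferInstance] :=
      condExp_stronglyMeasurable_mul_of_bound hm hsm hZ c hc'
    calc ∫ ω, h (X ω) * Z ω ∂P
        = ∫ ω, ((fun ω => h (X ω)) * Z) ω ∂P := rfl
      _ = ∫ ω, (P[(fun ω => h (X ω)) * Z | MeasurableSpace.comap X inferInstance]) ω ∂P := (integral_condExp hm).symm
      _ = ∫ ω, ((fun ω => h (X ω)) * P[Z | MeasurableSpace.comap X inferInstance]) ω ∂P := integral_congr_ae hmul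
      _ = 0 := by
          rw [← integral_zero Ω ℝ (μ := P)]
          refine integral_congr_ae ?_
          filter_upwards [hZ0] with ω h0
          simp [h0]
  -- measurability of Y and the Z's
  have hYmeas : Measurable Y := by
    have : Y = fun ω => A ω * Y1 ω + (1 - A ω) * Y0 ω := funext hY
    rw [this]
    exact (hA.mul hY1).add ((measurable_const.sub hA).mul hY0)
  have hZ1m : Measurable (fun ω => S ω * (1 - A ω) * (Y ω - μ0 (X ω))) :=
    (hS.mul (measurable_const.sub hA)).mul (hYmeas.sub (hμ0.comp hX))
  have hZ2m : Measurable (fun ω => (1 - S ω) * (Y ω - μ0 (X ω))) :=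
    (measurable_const.sub hS).mul (hYmeas.sub (hμ0.comp hX))
  have hdiffb : ∀ ω, |Y ω - μ0 (X ω)| ≤ CY + Cμ := fun ω =>
    (abs_sub _ _).trans (add_le_add (hYb ω) (hμ0b _))
  have hZ1b : ∀ ω, |S ω * (1 - A ω) * (Y ω - μ0 (X ω))| ≤ CY + Cμ := by
    intro ω
    rcases hS01 ω with h | h
    · rw [h]; simpa using by linarith [hCY, hCμ]
    · rcases hA01 ω with h' | h'
      · rw [h, h']; simpa using hdiffb ω
      · rw [h, h']; simpa using by linarith [hCY, hCμ]
  have hZ2b : ∀ ω, |(1 - S ω) * (Y ω - μ0 (X ω))| ≤ CY + Cμ := by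
    intro ω
    rcases hS01 ω with h | h
    · rw [h]; simpa using hdiffb ω
    · rw [h]; simpa using by linarith [hCY, hCμ]
  have intZ1 : Integrable (fun ω => S ω * (1 - A ω) * (Y ω - μ0 (X ω))) P :=
    int_of_bdd _ hZ1m.aestronglyMeasurable _ (Filter.Eventually.of_forall hZ1b)
  have intZ2 : Integrable (fun ω => (1 - S ω) * (Y ω - μ0 (X ω))) P :=
    int_of_bdd _ hZ2m.aestronglyMeasurable _ (Filter.Eventually.of_forall hZ2b)
  -- the two weight functions
  set h1 : (Fin d → ℝ) → ℝ := fun x =>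
    (π x / πR) / (π x * (1 - e x) + (1 - π x) * r x) with h1_def
  set h2 : (Fin d → ℝ) → ℝ := fun x =>
    (π x / πR) * r x / (π x * (1 - e x) + (1 - π x) * r x) with h2_def
  have hDmeas : Measurable (fun x => π x * (1 - e x) + (1 - π x) * r x) :=
    (hπ.mul (measurable_const.sub he)).add ((measurable_const.sub hπ).mul hr)
  have hh1m : Measurable h1 := (hπ.div measurable_const).div hDmeas
  have hh2m : Measurable h2 := ((hπ.div measurable_const).mul hr).div hDmeas
  -- a.e. bounds on h1, h2
  set c1 : ℝ := 1 / (πR * (2 * ε ^ 2)) with c1_def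
  have hc1nn : 0 ≤ c1 := by positivity
  have hbounds : ∀ᵐ ω ∂P, |h1 (X ω)| ≤ c1 ∧ |h2 (X ω)| ≤ c1 * Cr := by
    filter_upwards [hπb, heb, hrlb, hrub] with ω hπω heω hrω hrω'
    have hD : 2 * ε ^ 2 ≤ π (X ω) * (1 - e (X ω)) + (1 - π (X ω)) * r (X ω) := by
      nlinarith [hπω.1, hπω.2, heω.1, heω.2, hrω, hε]
    have hDpos : 0 < π (X ω) * (1 - e (X ω)) + (1 - π (X ω)) * r (X ω) := by
      nlinarith [hε]
    have hπ1 : π (X ω) ≤ 1 := by linarith [hπω.2, hε.le]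
    have hπnn : 0 ≤ π (X ω) := le_trans hε.le hπω.1
    have hh1nn : 0 ≤ h1 (X ω) := by
      rw [h1_def]
      positivity
    have hb1 : h1 (X ω) ≤ c1 := by
      rw [h1_def, c1_def]
      simp only []
      rw [div_div]
      refine div_le_div₀ (by norm_num) hπ1 (by positivity) ?_
      have h2e : 0 < 2 * ε ^ 2 := by positivity
      nlinarith [hπRpos, hD, h2e]
    have H1 : |h1 (X ω)| ≤ c1 := by rw [abs_of_nonneg hh1nn]; exact hb1
    refine ⟨H1, ?_⟩
    have hrnn : 0 ≤ r (X ω) := le_trans hε.le hrω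
    have h2eq : h2 (X ω) = h1 (X ω) * r (X ω) := by
      rw [h1_def, h2_def]
      simp only []
      rw [mul_div_right_comm]
    rw [h2eq, abs_mul, abs_of_nonneg hrnn]
    exact mul_le_mul H1 hrω' hrnn hc1nn
  have hb1 : ∀ᵐ ω ∂P, |h1 (X ω)| ≤ c1 := hbounds.mono fun ω h => h.1
  have hb2 : ∀ᵐ ω ∂P, |h2 (X ω)| ≤ c1 * Cr := hbounds.mono fun ω h => h.2
  -- pointwise decomposition of W (Y - μ0)
  have hsplit : ∀ ω, W ω * (Y ω - μ0 (X ω)) =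
      h1 (X ω) * (S ω * (1 - A ω) * (Y ω - μ0 (X ω)))
      + h2 (X ω) * ((1 - S ω) * (Y ω - μ0 (X ω))) := by
    intro ω
    rw [hW ω, h1_def, h2_def]
    simp only []
    field_simp
  -- integrability of the two pieces
  have int1 : Integrable (fun ω => h1 (X ω) * (S ω * (1 - A ω) * (Y ω - μ0 (X ω)))) P :=
    intZ1.bdd_mul ((hh1m.comp hX).aestronglyMeasurable)
      (by simpa [Real.norm_eq_abs] using hb1)
  have int2 : Integrable (fun ω => h2 (X ω) * ((1 - S ω) * (Y ω - μ0 (X ω)))) P :=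
    intZ2.bdd_mul ((hh2m.comp hX).aestronglyMeasurable)
      (by simpa [Real.norm_eq_abs] using hb2)
  have intW : Integrable (fun ω => W ω * (Y ω - μ0 (X ω))) P := by
    have : (fun ω => W ω * (Y ω - μ0 (X ω))) =
        fun ω => h1 (X ω) * (S ω * (1 - A ω) * (Y ω - μ0 (X ω)))
          + h2 (X ω) * ((1 - S ω) * (Y ω - μ0 (X ω))) := funext hsplit
    rw [this]
    exact int1.add int2
  -- E[W (Y - μ0)] = 0
  have IW : ∫ ω, W ω * (Y ω - μ0 (X ω)) ∂P = 0 := by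
    have hrw : (fun ω => W ω * (Y ω - μ0 (X ω))) =
        fun ω => h1 (X ω) * (S ω * (1 - A ω) * (Y ω - μ0 (X ω)))
          + h2 (X ω) * ((1 - S ω) * (Y ω - μ0 (X ω))) := funext hsplit
    rw [hrw, integral_add int1 int2,
      key h1 hh1m c1 hb1 _ intZ1 hunconf,
      key h2 hh2m (c1 * Cr) hb2 _ intZ2 hmeanexch]
    ring
  -- second piece
  have intSμ : Integrable (fun ω => S ω * μ0 (X ω)) P := by
    refine int_of_bdd _ (hS.mul (hμ0.comp hX)).aestronglyMeasurable Cμ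
      (Filter.Eventually.of_forall fun ω => ?_)
    rcases hS01 ω with h | h
    · rw [h]; simpa using hCμ
    · rw [h]; simpa using hμ0b (X ω)
  have intSY0 : Integrable (fun ω => S ω * Y0 ω) P := by
    refine int_of_bdd _ (hS.mul hY0).aestronglyMeasurable CY
      (Filter.Eventually.of_forall fun ω => ?_)
    rcases hS01 ω with h | h
    · rw [h]; simpa using hCY
    · rw [h]; simpa using (hbound ω).1
  have intSpiece : Integrable (fun ω => (S ω / πR) * μ0 (X ω)) P := by
    have : (fun ω => (S ω / πR) * μ0 (X ω)) = fun ω => πR⁻¹ * (S ω * μ0 (X ω)) := by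
      funext ω; field_simp
    rw [this]
    exact intSμ.const_mul _
  -- E[S (Y0 - μ0)] = 0 hence E[S Y0] = E[S μ0]
  have I3 : ∫ ω, S ω * (Y0 ω - μ0 (X ω)) ∂P = 0 := by
    calc ∫ ω, S ω * (Y0 ω - μ0 (X ω)) ∂P
        = ∫ ω, (P[fun ω => S ω * (Y0 ω - μ0 (X ω)) | MeasurableSpace.comap X inferInstance]) ω ∂P := (integral_condExp hm).symm
      _ = 0 := by
          rw [← integral_zero Ω ℝ (μ := P)]
          refine integral_congr_ae ?_
          filter_upwards [hreg] with ω h0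
          simp [h0]
  have hSY0μ : ∫ ω, S ω * Y0 ω ∂P = ∫ ω, S ω * μ0 (X ω) ∂P := by
    have hsub : ∫ ω, (S ω * Y0 ω - S ω * μ0 (X ω)) ∂P
        = ∫ ω, S ω * Y0 ω ∂P - ∫ ω, S ω * μ0 (X ω) ∂P := integral_sub intSY0 intSμ
    have heq : (fun ω => S ω * (Y0 ω - μ0 (X ω)))
        = fun ω => S ω * Y0 ω - S ω * μ0 (X ω) := by
      funext ω; ring
    rw [heq] at I3
    rw [hsub] at I3
    linarith
  -- compute the RHS
  have hms : MeasurableSet {ω | S ω = 1} := hS (measurableSet_singleton 1)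
  have hindic : (fun ω => S ω * Y0 ω) = Set.indicator {ω | S ω = 1} Y0 := by
    funext ω
    rcases hS01 ω with h | h
    · have : ω ∉ {ω | S ω = 1} := by simp [Set.mem_setOf_eq, h]
      rw [Set.indicator_of_notMem this, h, zero_mul]
    · have : ω ∈ {ω | S ω = 1} := h
      rw [Set.indicator_of_mem this, h, one_mul]
  have hSY0set : ∫ ω, S ω * Y0 ω ∂P = ∫ ω in {ω | S ω = 1}, Y0 ω ∂P := by
    rw [hindic, integral_indicator hms]
  have hRHS : ∫ ω, Y0 ω ∂(P[|{ω | S ω = 1}]) = πR⁻¹ * ∫ ω, S ω * Y0 ω ∂P := by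
    rw [ProbabilityTheory.cond, integral_smul_measure, hSY0set, hπR,
      ENNReal.toReal_inv, smul_eq_mul]
  -- put it all together
  rw [integral_add intW intSpiece, IW, hRHS, hSY0μ, zero_add]
  have : (fun ω => (S ω / πR) * μ0 (X ω)) = fun ω => πR⁻¹ * (S ω * μ0 (X ω)) := by
    funext ω; field_simp
  rw [this, integral_const_mul]
end

section
/- The external-control borrowing estimator of the control-arm mean is doubly robust: define φ_0(π̃, ẽ, r̃, μ̃) = W̃·(Y − μ̃(X)) + (S/π_R)·μ̃(X) with W̃ = (π̃(X)/π_R)·{S(1 − A) + (1 − S)·r̃(X)} / [π̃(X)·(1 − ẽ(X)) + (1 − π̃(X))·r̃(X)], where π̃, ẽ, r̃, μ̃ are measurable working models with ε ≤ π̃(X) ≤ 1 − ε, ε ≤ ẽ(X) ≤ 1 − ε, ε ≤ r̃(X) with r̃(X) bounded, and μ̃ bounded. If either (sampling model correct) π̃(X) = π(X) and ẽ(X) = e(X) almost surely, or (outcome model correct) μ̃(X) = μ_0(X) almost surely, then E[φ_0(π̃, ẽ, r̃, μ̃)] = E[Y(0) | S = 1], for any admissible r̃. -/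
open MeasureTheory ProbabilityTheory

private lemma abs_mul_le' {a A b B : ℝ} (ha : |a| ≤ A) (hb : |b| ≤ B) : |a * b| ≤ A * B := by
  rw [abs_mul]
  exact mul_le_mul ha hb (abs_nonneg _) ((abs_nonneg a).trans ha)

private lemma integrable_of_bound {Ω : Type*} [MeasurableSpace Ω] {P : Measure Ω}
    [IsFiniteMeasure P] {f : Ω → ℝ} (hf : AEStronglyMeasurable f P)
    (C : ℝ) (h : ∀ᵐ ω ∂P, |f ω| ≤ C) : Integrable f P :=
  Integrable.mono' (integrable_const C) hf
    (by filter_upwards [h] with ω hω using by simpa using hω)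

private lemma pullout {Ω : Type*} {m0 : MeasurableSpace Ω} (P : Measure Ω) [IsProbabilityMeasure P]
    (m : MeasurableSpace Ω) (hm : m ≤ m0)
    (h Z ζ : Ω → ℝ) (hh : StronglyMeasurable[m] h)
    (C : ℝ) (hC : ∀ᵐ ω ∂P, |h ω| ≤ C)
    (hZ : Integrable Z P)
    (hζ : P[Z | m] =ᵐ[P] ζ) :
    ∫ ω, h ω * Z ω ∂P = ∫ ω, h ω * ζ ω ∂P := by
  have hCb : ∀ᵐ ω ∂P, ‖h ω‖ ≤ C := by filter_upwards [hC] with ω hω using by simpa using hω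
  have hhZ : Integrable (h * Z) P := hZ.bdd_mul ((hh.mono hm).aestronglyMeasurable) hCb
  calc ∫ ω, h ω * Z ω ∂P = ∫ ω, (h * Z) ω ∂P := rfl
    _ = ∫ ω, (P[h * Z | m]) ω ∂P := (integral_condExp hm (f := h * Z)).symm
    _ = ∫ ω, (h * P[Z | m]) ω ∂P := integral_congr_ae (condExp_mul_of_stronglyMeasurable_left hh hhZ hZ)
    _ = ∫ ω, h ω * ζ ω ∂P := integral_congr_ae (by
          filter_upwards [hζ] with ω hω
          simp only [Pi.mul_apply, hω])

/-- **Double robustness of the external-control borrowing estimator of the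
control-arm mean.**  With working models `π̃, ẽ, r̃, μ̃` and weight
`W̃ = (π̃(X)/π_R)·{S(1−A) + (1−S)·r̃(X)} / [π̃(X)·(1−ẽ(X)) + (1−π̃(X))·r̃(X)]`,
if either the sampling model is correct (`π̃(X) = π(X)` and `ẽ(X) = e(X)` a.s.)
or the outcome model is correct (`μ̃(X) = μ₀(X)` a.s.), then
`E[W̃·(Y − μ̃(X)) + (S/π_R)·μ̃(X)] = E[Y(0) | S = 1]`, for any admissible `r̃`. -/
theorem borrowing_doubly_robust
    {Ω : Type*} [MeasurableSpace Ω] (P : Measure Ω) [IsProbabilityMeasure P]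
    {d : ℕ} (X : Ω → (Fin d → ℝ)) (hX : Measurable X)
    (S : Ω → ℝ) (hS : Measurable S) (hS01 : ∀ ω, S ω = 0 ∨ S ω = 1)
    (A : Ω → ℝ) (hA : Measurable A) (hA01 : ∀ ω, A ω = 0 ∨ A ω = 1)
    (hA0 : ∀ᵐ ω ∂P, S ω = 0 → A ω = 0)
    (Y0 Y1 : Ω → ℝ) (hY0 : Measurable Y0) (hY1 : Measurable Y1)
    (CY : ℝ) (hbound : ∀ ω, |Y0 ω| ≤ CY ∧ |Y1 ω| ≤ CY)
    (Y : Ω → ℝ) (hY : ∀ ω, Y ω = A ω * Y1 ω + (1 - A ω) * Y0 ω)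
    (πR : ℝ) (hπR : πR = (P {ω | S ω = 1}).toReal) (hπRpos : 0 < πR)
    (ε : ℝ) (hε : 0 < ε)
    -- true nuisance functions
    (π e : (Fin d → ℝ) → ℝ) (hπ : Measurable π) (he : Measurable e)
    (hπb : ∀ᵐ ω ∂P, ε ≤ π (X ω) ∧ π (X ω) ≤ 1 - ε)
    (heb : ∀ᵐ ω ∂P, ε ≤ e (X ω) ∧ e (X ω) ≤ 1 - ε)
    (hScond : P[S | MeasurableSpace.comap X inferInstance] =ᵐ[P] fun ω => π (X ω))
    (hSAcond : P[fun ω => S ω * A ω | MeasurableSpace.comap X inferInstance]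
        =ᵐ[P] fun ω => e (X ω) * π (X ω))
    (μ0 : (Fin d → ℝ) → ℝ) (hμ0 : Measurable μ0) (Cμ : ℝ) (hμ0b : ∀ x, |μ0 x| ≤ Cμ)
    (hunconf : P[fun ω => S ω * (1 - A ω) * (Y ω - μ0 (X ω)) |
        MeasurableSpace.comap X inferInstance] =ᵐ[P] fun _ => 0)
    (hmeanexch : P[fun ω => (1 - S ω) * (Y ω - μ0 (X ω)) |
        MeasurableSpace.comap X inferInstance] =ᵐ[P] fun _ => 0)
    (hreg : P[fun ω => S ω * (Y0 ω - μ0 (X ω)) |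
        MeasurableSpace.comap X inferInstance] =ᵐ[P] fun _ => 0)
    -- working models
    (πt et rt μt : (Fin d → ℝ) → ℝ)
    (hπt : Measurable πt) (het : Measurable et) (hrt : Measurable rt) (hμt : Measurable μt)
    (hπtb : ∀ᵐ ω ∂P, ε ≤ πt (X ω) ∧ πt (X ω) ≤ 1 - ε)
    (hetb : ∀ᵐ ω ∂P, ε ≤ et (X ω) ∧ et (X ω) ≤ 1 - ε)
    (hrtlb : ∀ᵐ ω ∂P, ε ≤ rt (X ω)) (Cr : ℝ) (hrtub : ∀ᵐ ω ∂P, rt (X ω) ≤ Cr)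
    (Cμt : ℝ) (hμtb : ∀ x, |μt x| ≤ Cμt)
    (Wt : Ω → ℝ)
    (hWt : ∀ ω, Wt ω = (πt (X ω) / πR) * (S ω * (1 - A ω) + (1 - S ω) * rt (X ω)) /
        (πt (X ω) * (1 - et (X ω)) + (1 - πt (X ω)) * rt (X ω)))
    (hdr : (((fun ω => πt (X ω)) =ᵐ[P] fun ω => π (X ω)) ∧
            ((fun ω => et (X ω)) =ᵐ[P] fun ω => e (X ω))) ∨
           ((fun ω => μt (X ω)) =ᵐ[P] fun ω => μ0 (X ω))) :
    ∫ ω, (Wt ω * (Y ω - μt (X ω)) + (S ω / πR) * μt (X ω)) ∂P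
      = ∫ ω, Y0 ω ∂(P[|{ω | S ω = 1}]) := by
  classical
  have hm : MeasurableSpace.comap X inferInstance ≤ ‹MeasurableSpace Ω› :=
    measurable_iff_comap_le.mp hX
  have hXm : Measurable[MeasurableSpace.comap X inferInstance] X :=
    measurable_iff_comap_le.mpr le_rfl
  have smeas : ∀ {F : (Fin d → ℝ) → ℝ}, Measurable F →
      StronglyMeasurable[MeasurableSpace.comap X inferInstance] (fun ω => F (X ω)) :=
    fun hF => (hF.comp hXm).stronglyMeasurable
  -- auxiliary functions
  set D : (Fin d → ℝ) → ℝ := fun x => πt x * (1 - et x) + (1 - πt x) * rt x with hDdef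
  set G : (Fin d → ℝ) → ℝ := fun x => πt x / πR / D x with hGdef
  have hD : Measurable D := (hπt.mul (measurable_const.sub het)).add
    ((measurable_const.sub hπt).mul hrt)
  have hG : Measurable G := (hπt.div measurable_const).div hD
  set Cg : ℝ := 1 / πR / ε ^ 2 with hCgdef
  -- pointwise bounds
  have hSb : ∀ ω, |S ω| ≤ 1 := fun ω => by rcases hS01 ω with h | h <;> simp [h]
  have hAb : ∀ ω, |A ω| ≤ 1 := fun ω => by rcases hA01 ω with h | h <;> simp [h]
  have h1Sb : ∀ ω, |1 - S ω| ≤ 1 := fun ω => by rcases hS01 ω with h | h <;> simp [h]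
  have h1Ab : ∀ ω, |1 - A ω| ≤ 1 := fun ω => by rcases hA01 ω with h | h <;> simp [h]
  have hYb : ∀ ω, |Y ω| ≤ CY := by
    intro ω
    rcases hA01 ω with h | h
    · rw [hY ω, h]; simpa using (hbound ω).1
    · rw [hY ω, h]; simpa using (hbound ω).2
  have hYμb : ∀ ω, |Y ω - μ0 (X ω)| ≤ CY + Cμ :=
    fun ω => (abs_sub _ _).trans (add_le_add (hYb ω) (hμ0b (X ω)))
  have hY0μb : ∀ ω, |Y0 ω - μ0 (X ω)| ≤ CY + Cμ :=
    fun ω => (abs_sub _ _).trans (add_le_add (hbound ω).1 (hμ0b (X ω)))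
  have hμμb : ∀ ω, |μ0 (X ω) - μt (X ω)| ≤ Cμ + Cμt :=
    fun ω => (abs_sub _ _).trans (add_le_add (hμ0b (X ω)) (hμtb (X ω)))
  have hμtR : ∀ ω, |μt (X ω) / πR| ≤ Cμt / πR := by
    intro ω
    rw [abs_div, abs_of_pos hπRpos]
    gcongr
    exact hμtb (X ω)
  -- a.e. bounds involving the working models
  have hGfact : ∀ᵐ ω ∂P, D (X ω) ≠ 0 ∧ |G (X ω)| ≤ Cg := by
    filter_upwards [hπtb, hetb, hrtlb] with ω h1 h2 h3
    have hDl : ε ^ 2 ≤ D (X ω) := by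
      simp only [hDdef]
      nlinarith [h1.1, h1.2, h2.1, h2.2, h3]
    have hDpos : 0 < D (X ω) := lt_of_lt_of_le (by positivity) hDl
    refine ⟨hDpos.ne', ?_⟩
    have hGnn : 0 ≤ G (X ω) := by
      simp only [hGdef]
      have : 0 ≤ πt (X ω) := le_trans hε.le h1.1
      positivity
    rw [abs_of_nonneg hGnn]
    simp only [hGdef, hCgdef]
    have hnum : πt (X ω) / πR ≤ 1 / πR :=
      (div_le_div_iff_of_pos_right hπRpos).mpr (by linarith [h1.2])
    exact div_le_div₀ (by positivity) hnum (by positivity) hDl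
  have hgb : ∀ᵐ ω ∂P, |G (X ω)| ≤ Cg := by filter_upwards [hGfact] with ω h using h.2
  have hrtb : ∀ᵐ ω ∂P, |rt (X ω)| ≤ Cr := by
    filter_upwards [hrtlb, hrtub] with ω h1 h2
    exact abs_le.mpr ⟨by linarith, h2⟩
  have hgrb : ∀ᵐ ω ∂P, |G (X ω) * rt (X ω)| ≤ Cg * Cr := by
    filter_upwards [hgb, hrtb] with ω h1 h2 using abs_mul_le' h1 h2
  -- measurability of Y
  have hYmeas : Measurable Y := by
    have : Y = fun ω => A ω * Y1 ω + (1 - A ω) * Y0 ω := funext hY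
    rw [this]
    exact (hA.mul hY1).add ((measurable_const.sub hA).mul hY0)
  -- integrability of the Z-factors
  have hSint : Integrable S P := integrable_of_bound hS.aestronglyMeasurable 1 (ae_of_all _ hSb)
  have hSAint : Integrable (fun ω => S ω * A ω) P :=
    integrable_of_bound ((hS.mul hA).aestronglyMeasurable) 1
      (ae_of_all _ fun ω => by simpa using abs_mul_le' (hSb ω) (hAb ω))
  have hZ1int : Integrable (fun ω => S ω * (1 - A ω) * (Y ω - μ0 (X ω))) P :=
    integrable_of_bound ((hS.mul (measurable_const.sub hA)).mul
      (hYmeas.sub (hμ0.comp hX))).aestronglyMeasurable (1 * 1 * (CY + Cμ))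
      (ae_of_all _ fun ω => abs_mul_le' (abs_mul_le' (hSb ω) (h1Ab ω)) (hYμb ω))
  have hZ2int : Integrable (fun ω => S ω * (1 - A ω)) P :=
    integrable_of_bound ((hS.mul (measurable_const.sub hA))).aestronglyMeasurable (1 * 1)
      (ae_of_all _ fun ω => abs_mul_le' (hSb ω) (h1Ab ω))
  have hZ3int : Integrable (fun ω => (1 - S ω) * (Y ω - μ0 (X ω))) P :=
    integrable_of_bound ((measurable_const.sub hS).mul
      (hYmeas.sub (hμ0.comp hX))).aestronglyMeasurable (1 * (CY + Cμ))
      (ae_of_all _ fun ω => abs_mul_le' (h1Sb ω) (hYμb ω))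
  have hZ4int : Integrable (fun ω => 1 - S ω) P :=
    integrable_of_bound ((measurable_const.sub hS)).aestronglyMeasurable 1 (ae_of_all _ h1Sb)
  have hZregint : Integrable (fun ω => S ω * (Y0 ω - μ0 (X ω))) P :=
    integrable_of_bound (hS.mul (hY0.sub (hμ0.comp hX))).aestronglyMeasurable (1 * (CY + Cμ))
      (ae_of_all _ fun ω => abs_mul_le' (hSb ω) (hY0μb ω))
  -- conditional expectation of S(1-A) and of (1-S)
  have hZ2cond : P[(fun ω => S ω * (1 - A ω)) | MeasurableSpace.comap X inferInstance]
      =ᵐ[P] fun ω => π (X ω) * (1 - e (X ω)) := by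
    have hfe : (fun ω => S ω * (1 - A ω)) = S - fun ω => S ω * A ω := by
      funext ω; simp [Pi.sub_apply]; ring
    calc P[(fun ω => S ω * (1 - A ω)) | MeasurableSpace.comap X inferInstance] = P[S - (fun ω => S ω * A ω) | MeasurableSpace.comap X inferInstance] := by rw [hfe]
      _ =ᵐ[P] P[S | MeasurableSpace.comap X inferInstance] - P[(fun ω => S ω * A ω) | MeasurableSpace.comap X inferInstance] := condExp_sub hSint hSAint _
      _ =ᵐ[P] fun ω => π (X ω) * (1 - e (X ω)) := by
          filter_upwards [hScond, hSAcond] with ω h1 h2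
          simp only [Pi.sub_apply, h1, h2]; ring
  have hZ4cond : P[(fun ω => 1 - S ω) | MeasurableSpace.comap X inferInstance] =ᵐ[P] fun ω => 1 - π (X ω) := by
    have hfe : (fun ω => 1 - S ω) = (fun _ => (1 : ℝ)) - S := by
      funext ω; simp [Pi.sub_apply]
    calc P[(fun ω => 1 - S ω) | MeasurableSpace.comap X inferInstance] = P[(fun _ => (1 : ℝ)) - S | MeasurableSpace.comap X inferInstance] := by rw [hfe]
      _ =ᵐ[P] P[(fun _ => (1 : ℝ)) | MeasurableSpace.comap X inferInstance] - P[S | MeasurableSpace.comap X inferInstance] := condExp_sub (integrable_const 1) hSint _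
      _ =ᵐ[P] fun ω => 1 - π (X ω) := by
          filter_upwards [hScond] with ω h1
          simp only [Pi.sub_apply, h1, condExp_const hm (1 : ℝ)]
  -- the five pullout identities
  have E1 : ∫ ω, G (X ω) * (S ω * (1 - A ω) * (Y ω - μ0 (X ω))) ∂P
      = ∫ ω, G (X ω) * (0 : ℝ) ∂P :=
    pullout P (MeasurableSpace.comap X inferInstance) hm (fun ω => G (X ω)) _ _ (smeas hG) Cg hgb hZ1int hunconf
  have E2 : ∫ ω, (G (X ω) * (μ0 (X ω) - μt (X ω))) * (S ω * (1 - A ω)) ∂P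
      = ∫ ω, (G (X ω) * (μ0 (X ω) - μt (X ω))) * (π (X ω) * (1 - e (X ω))) ∂P :=
    pullout P (MeasurableSpace.comap X inferInstance) hm (fun ω => G (X ω) * (μ0 (X ω) - μt (X ω))) _ _
      (smeas (hG.mul (hμ0.sub hμt))) (Cg * (Cμ + Cμt))
      (by filter_upwards [hgb] with ω h using abs_mul_le' h (hμμb ω)) hZ2int hZ2cond
  have E3 : ∫ ω, (G (X ω) * rt (X ω)) * ((1 - S ω) * (Y ω - μ0 (X ω))) ∂P
      = ∫ ω, (G (X ω) * rt (X ω)) * (0 : ℝ) ∂P :=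
    pullout P (MeasurableSpace.comap X inferInstance) hm (fun ω => G (X ω) * rt (X ω)) _ _ (smeas (hG.mul hrt)) (Cg * Cr)
      hgrb hZ3int hmeanexch
  have E4 : ∫ ω, (G (X ω) * rt (X ω) * (μ0 (X ω) - μt (X ω))) * (1 - S ω) ∂P
      = ∫ ω, (G (X ω) * rt (X ω) * (μ0 (X ω) - μt (X ω))) * (1 - π (X ω)) ∂P :=
    pullout P (MeasurableSpace.comap X inferInstance) hm (fun ω => G (X ω) * rt (X ω) * (μ0 (X ω) - μt (X ω))) _ _
      (smeas ((hG.mul hrt).mul (hμ0.sub hμt))) (Cg * Cr * (Cμ + Cμt))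
      (by filter_upwards [hgrb] with ω h using abs_mul_le' h (hμμb ω)) hZ4int hZ4cond
  have E5 : ∫ ω, (μt (X ω) / πR) * S ω ∂P = ∫ ω, (μt (X ω) / πR) * π (X ω) ∂P :=
    pullout P (MeasurableSpace.comap X inferInstance) hm (fun ω => μt (X ω) / πR) _ _ (smeas (hμt.div measurable_const))
      (Cμt / πR) (ae_of_all _ hμtR) hSint hScond
  -- integrability of the five summands
  have hi1 : Integrable (fun ω => G (X ω) * (S ω * (1 - A ω) * (Y ω - μ0 (X ω)))) P :=
    integrable_of_bound ((hG.comp hX).mul ((hS.mul (measurable_const.sub hA)).mul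
      (hYmeas.sub (hμ0.comp hX)))).aestronglyMeasurable (Cg * (1 * 1 * (CY + Cμ)))
      (by filter_upwards [hgb] with ω h using
        abs_mul_le' h (abs_mul_le' (abs_mul_le' (hSb ω) (h1Ab ω)) (hYμb ω)))
  have hi2 : Integrable (fun ω => (G (X ω) * (μ0 (X ω) - μt (X ω))) * (S ω * (1 - A ω))) P :=
    integrable_of_bound (((hG.comp hX).mul ((hμ0.comp hX).sub (hμt.comp hX))).mul
      (hS.mul (measurable_const.sub hA))).aestronglyMeasurable (Cg * (Cμ + Cμt) * (1 * 1))
      (by filter_upwards [hgb] with ω h using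
        abs_mul_le' (abs_mul_le' h (hμμb ω)) (abs_mul_le' (hSb ω) (h1Ab ω)))
  have hi3 : Integrable (fun ω => (G (X ω) * rt (X ω)) * ((1 - S ω) * (Y ω - μ0 (X ω)))) P :=
    integrable_of_bound (((hG.comp hX).mul (hrt.comp hX)).mul ((measurable_const.sub hS).mul
      (hYmeas.sub (hμ0.comp hX)))).aestronglyMeasurable (Cg * Cr * (1 * (CY + Cμ)))
      (by filter_upwards [hgrb] with ω h using
        abs_mul_le' h (abs_mul_le' (h1Sb ω) (hYμb ω)))
  have hi4 : Integrable (fun ω => (G (X ω) * rt (X ω) * (μ0 (X ω) - μt (X ω))) * (1 - S ω)) P :=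
    integrable_of_bound ((((hG.comp hX).mul (hrt.comp hX)).mul
      ((hμ0.comp hX).sub (hμt.comp hX))).mul
      (measurable_const.sub hS)).aestronglyMeasurable (Cg * Cr * (Cμ + Cμt) * 1)
      (by filter_upwards [hgrb] with ω h using
        abs_mul_le' (abs_mul_le' h (hμμb ω)) (h1Sb ω))
  have hi5 : Integrable (fun ω => (μt (X ω) / πR) * S ω) P :=
    integrable_of_bound (((hμt.comp hX).div measurable_const).mul hS).aestronglyMeasurable
      (Cμt / πR * 1) (ae_of_all _ fun ω => abs_mul_le' (hμtR ω) (hSb ω))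
  have hi12 : Integrable (fun ω => G (X ω) * (S ω * (1 - A ω) * (Y ω - μ0 (X ω)))
      + (G (X ω) * (μ0 (X ω) - μt (X ω))) * (S ω * (1 - A ω))) P := hi1.add hi2
  have hi123 : Integrable (fun ω => G (X ω) * (S ω * (1 - A ω) * (Y ω - μ0 (X ω)))
      + (G (X ω) * (μ0 (X ω) - μt (X ω))) * (S ω * (1 - A ω))
      + (G (X ω) * rt (X ω)) * ((1 - S ω) * (Y ω - μ0 (X ω)))) P := hi12.add hi3
  have hi1234 : Integrable (fun ω => G (X ω) * (S ω * (1 - A ω) * (Y ω - μ0 (X ω)))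
      + (G (X ω) * (μ0 (X ω) - μt (X ω))) * (S ω * (1 - A ω))
      + (G (X ω) * rt (X ω)) * ((1 - S ω) * (Y ω - μ0 (X ω)))
      + (G (X ω) * rt (X ω) * (μ0 (X ω) - μt (X ω))) * (1 - S ω)) P := hi123.add hi4
  -- integrability of the pulled-out versions
  have hj2 : Integrable (fun ω => (G (X ω) * (μ0 (X ω) - μt (X ω)))
      * (π (X ω) * (1 - e (X ω)))) P :=
    integrable_of_bound (((hG.comp hX).mul ((hμ0.comp hX).sub (hμt.comp hX))).mul
      ((hπ.comp hX).mul (measurable_const.sub (he.comp hX)))).aestronglyMeasurable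
      (Cg * (Cμ + Cμt) * (1 * 1))
      (by
        filter_upwards [hgb, hπb, heb] with ω h h1 h2
        have hπb1 : |π (X ω)| ≤ 1 := abs_le.mpr ⟨by linarith [h1.1], by linarith [h1.2]⟩
        have heb1 : |1 - e (X ω)| ≤ 1 := abs_le.mpr ⟨by linarith [h2.2], by linarith [h2.1]⟩
        exact abs_mul_le' (abs_mul_le' h (hμμb ω)) (abs_mul_le' hπb1 heb1))
  have hj4 : Integrable (fun ω => (G (X ω) * rt (X ω) * (μ0 (X ω) - μt (X ω)))
      * (1 - π (X ω))) P :=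
    integrable_of_bound ((((hG.comp hX).mul (hrt.comp hX)).mul
      ((hμ0.comp hX).sub (hμt.comp hX))).mul
      (measurable_const.sub (hπ.comp hX))).aestronglyMeasurable
      (Cg * Cr * (Cμ + Cμt) * 1)
      (by
        filter_upwards [hgrb, hπb] with ω h h1
        have hπb1 : |1 - π (X ω)| ≤ 1 := abs_le.mpr ⟨by linarith [h1.2], by linarith [h1.1]⟩
        exact abs_mul_le' (abs_mul_le' h (hμμb ω)) hπb1)
  have hj5 : Integrable (fun ω => (μt (X ω) / πR) * π (X ω)) P :=
    integrable_of_bound (((hμt.comp hX).div measurable_const).mul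
      (hπ.comp hX)).aestronglyMeasurable (Cμt / πR * 1)
      (by
        filter_upwards [hπb] with ω h1
        have hπb1 : |π (X ω)| ≤ 1 := abs_le.mpr ⟨by linarith [h1.1], by linarith [h1.2]⟩
        exact abs_mul_le' (hμtR ω) hπb1)
  have hj24 : Integrable (fun ω => (G (X ω) * (μ0 (X ω) - μt (X ω))) * (π (X ω) * (1 - e (X ω)))
      + (G (X ω) * rt (X ω) * (μ0 (X ω) - μt (X ω))) * (1 - π (X ω))) P := hj2.add hj4
  -- pointwise decomposition of the estimator
  have hptw : ∀ ω, Wt ω * (Y ω - μt (X ω)) + (S ω / πR) * μt (X ω)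
      = G (X ω) * (S ω * (1 - A ω) * (Y ω - μ0 (X ω)))
      + (G (X ω) * (μ0 (X ω) - μt (X ω))) * (S ω * (1 - A ω))
      + (G (X ω) * rt (X ω)) * ((1 - S ω) * (Y ω - μ0 (X ω)))
      + (G (X ω) * rt (X ω) * (μ0 (X ω) - μt (X ω))) * (1 - S ω)
      + (μt (X ω) / πR) * S ω := by
    intro ω
    rw [hWt ω]
    simp only [hGdef, hDdef]
    ring
  -- the left-hand side reduces to a single integral of a function of X
  have hLHS : ∫ ω, (Wt ω * (Y ω - μt (X ω)) + (S ω / πR) * μt (X ω)) ∂P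
      = ∫ ω, (G (X ω) * (μ0 (X ω) - μt (X ω))
          * (π (X ω) * (1 - e (X ω)) + (1 - π (X ω)) * rt (X ω))
          + μt (X ω) * π (X ω) / πR) ∂P := by
    calc ∫ ω, (Wt ω * (Y ω - μt (X ω)) + (S ω / πR) * μt (X ω)) ∂P
        = ∫ ω, (G (X ω) * (S ω * (1 - A ω) * (Y ω - μ0 (X ω)))
          + (G (X ω) * (μ0 (X ω) - μt (X ω))) * (S ω * (1 - A ω))
          + (G (X ω) * rt (X ω)) * ((1 - S ω) * (Y ω - μ0 (X ω)))
          + (G (X ω) * rt (X ω) * (μ0 (X ω) - μt (X ω))) * (1 - S ω)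
          + (μt (X ω) / πR) * S ω) ∂P := integral_congr_ae (ae_of_all _ hptw)
      _ = (∫ ω, (G (X ω) * (S ω * (1 - A ω) * (Y ω - μ0 (X ω)))
          + (G (X ω) * (μ0 (X ω) - μt (X ω))) * (S ω * (1 - A ω))
          + (G (X ω) * rt (X ω)) * ((1 - S ω) * (Y ω - μ0 (X ω)))
          + (G (X ω) * rt (X ω) * (μ0 (X ω) - μt (X ω))) * (1 - S ω)) ∂P)
          + ∫ ω, (μt (X ω) / πR) * S ω ∂P := integral_add hi1234 hi5
      _ = ((∫ ω, (G (X ω) * (S ω * (1 - A ω) * (Y ω - μ0 (X ω)))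
          + (G (X ω) * (μ0 (X ω) - μt (X ω))) * (S ω * (1 - A ω))
          + (G (X ω) * rt (X ω)) * ((1 - S ω) * (Y ω - μ0 (X ω)))) ∂P)
          + ∫ ω, (G (X ω) * rt (X ω) * (μ0 (X ω) - μt (X ω))) * (1 - S ω) ∂P)
          + ∫ ω, (μt (X ω) / πR) * S ω ∂P := by rw [integral_add hi123 hi4]
      _ = (((∫ ω, (G (X ω) * (S ω * (1 - A ω) * (Y ω - μ0 (X ω)))
          + (G (X ω) * (μ0 (X ω) - μt (X ω))) * (S ω * (1 - A ω))) ∂P)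
          + ∫ ω, (G (X ω) * rt (X ω)) * ((1 - S ω) * (Y ω - μ0 (X ω))) ∂P)
          + ∫ ω, (G (X ω) * rt (X ω) * (μ0 (X ω) - μt (X ω))) * (1 - S ω) ∂P)
          + ∫ ω, (μt (X ω) / πR) * S ω ∂P := by rw [integral_add hi12 hi3]
      _ = ((((∫ ω, G (X ω) * (S ω * (1 - A ω) * (Y ω - μ0 (X ω))) ∂P)
          + ∫ ω, (G (X ω) * (μ0 (X ω) - μt (X ω))) * (S ω * (1 - A ω)) ∂P)
          + ∫ ω, (G (X ω) * rt (X ω)) * ((1 - S ω) * (Y ω - μ0 (X ω))) ∂P)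
          + ∫ ω, (G (X ω) * rt (X ω) * (μ0 (X ω) - μt (X ω))) * (1 - S ω) ∂P)
          + ∫ ω, (μt (X ω) / πR) * S ω ∂P := by rw [integral_add hi1 hi2]
      _ = (((0 + ∫ ω, (G (X ω) * (μ0 (X ω) - μt (X ω))) * (π (X ω) * (1 - e (X ω))) ∂P)
          + 0)
          + ∫ ω, (G (X ω) * rt (X ω) * (μ0 (X ω) - μt (X ω))) * (1 - π (X ω)) ∂P)
          + ∫ ω, (μt (X ω) / πR) * π (X ω) ∂P := by
            rw [E1, E2, E3, E4, E5]; simp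
      _ = (∫ ω, ((G (X ω) * (μ0 (X ω) - μt (X ω))) * (π (X ω) * (1 - e (X ω)))
          + (G (X ω) * rt (X ω) * (μ0 (X ω) - μt (X ω))) * (1 - π (X ω))) ∂P)
          + ∫ ω, (μt (X ω) / πR) * π (X ω) ∂P := by rw [integral_add hj2 hj4]; ring
      _ = ∫ ω, (((G (X ω) * (μ0 (X ω) - μt (X ω))) * (π (X ω) * (1 - e (X ω)))
          + (G (X ω) * rt (X ω) * (μ0 (X ω) - μt (X ω))) * (1 - π (X ω)))
          + (μt (X ω) / πR) * π (X ω)) ∂P := (integral_add hj24 hj5).symm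
      _ = ∫ ω, (G (X ω) * (μ0 (X ω) - μt (X ω))
          * (π (X ω) * (1 - e (X ω)) + (1 - π (X ω)) * rt (X ω))
          + μt (X ω) * π (X ω) / πR) ∂P := integral_congr_ae (ae_of_all _ fun ω => by ring)
  -- double robustness: in either case the integrand reduces a.e. to μ0·π/πR
  have hcase : ∫ ω, (G (X ω) * (μ0 (X ω) - μt (X ω))
          * (π (X ω) * (1 - e (X ω)) + (1 - π (X ω)) * rt (X ω))
          + μt (X ω) * π (X ω) / πR) ∂P
      = ∫ ω, μ0 (X ω) * π (X ω) / πR ∂P := by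
    rcases hdr with ⟨hπeq, heeq⟩ | hμeq
    · refine integral_congr_ae ?_
      filter_upwards [hπeq, heeq, hGfact] with ω h1 h2 h3
      have hD0 : D (X ω) ≠ 0 := h3.1
      simp only [hDdef] at hD0
      rw [← h1, ← h2]
      simp only [hGdef, hDdef]
      field_simp
      ring
    · refine integral_congr_ae ?_
      filter_upwards [hμeq] with ω h1
      rw [h1]
      ring
  -- the right-hand side
  have hs : MeasurableSet {ω | S ω = 1} := by
    have : {ω | S ω = 1} = S ⁻¹' {1} := rfl
    rw [this]; exact hS (measurableSet_singleton 1)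
  have hRHS : ∫ ω, Y0 ω ∂(P[|{ω | S ω = 1}]) = ∫ ω, μ0 (X ω) * π (X ω) / πR ∂P := by
    have h1 : ∫ ω, Y0 ω ∂(P[|{ω | S ω = 1}])
        = (P {ω | S ω = 1})⁻¹.toReal * ∫ ω in {ω | S ω = 1}, Y0 ω ∂P := by
      rw [show P[|{ω | S ω = 1}] = (P {ω | S ω = 1})⁻¹ • P.restrict {ω | S ω = 1} from rfl,
        integral_smul_measure]
      rfl
    have h2 : ∫ ω in {ω | S ω = 1}, Y0 ω ∂P = ∫ ω, S ω * Y0 ω ∂P := by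
      rw [← integral_indicator hs]
      congr 1
      funext ω
      rcases hS01 ω with h | h
      · rw [Set.indicator_of_notMem (by simp [Set.mem_setOf_eq, h]), h, zero_mul]
      · rw [Set.indicator_of_mem (by simp [Set.mem_setOf_eq, h]), h, one_mul]
    have h3 : ∫ ω, S ω * Y0 ω ∂P
        = (∫ ω, S ω * (Y0 ω - μ0 (X ω)) ∂P) + ∫ ω, μ0 (X ω) * S ω ∂P := by
      have hμSint : Integrable (fun ω => μ0 (X ω) * S ω) P :=
        integrable_of_bound ((hμ0.comp hX).mul hS).aestronglyMeasurable (Cμ * 1)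
          (ae_of_all _ fun ω => abs_mul_le' (hμ0b (X ω)) (hSb ω))
      rw [← integral_add hZregint hμSint]
      exact integral_congr_ae (ae_of_all _ fun ω => by ring)
    have h4 : ∫ ω, S ω * (Y0 ω - μ0 (X ω)) ∂P = 0 := by
      rw [← integral_condExp hm (f := fun ω => S ω * (Y0 ω - μ0 (X ω))),
        integral_congr_ae hreg]
      simp
    have h5 : ∫ ω, μ0 (X ω) * S ω ∂P = ∫ ω, μ0 (X ω) * π (X ω) ∂P :=
      pullout P (MeasurableSpace.comap X inferInstance) hm (fun ω => μ0 (X ω)) _ _ (smeas hμ0) Cμ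
        (ae_of_all _ fun ω => hμ0b (X ω)) hSint hScond
    rw [h1, h2, h3, h4, h5, zero_add, ENNReal.toReal_inv, ← hπR]
    rw [integral_div]
    rw [inv_mul_eq_div]
  rw [hLHS, hcase, hRHS]
end
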